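/- arXiv:1407.8149 — 8 statements merged into one kernel-verified Lean document; each statement's English description precedes it below -/
import Mathlib

section
/- The space of normalized convex k-gons in ℝP² (k ≥ 4) is homeomorphic to ℝ^{2k−8}. Concretely, in an affine chart where the first four vertices are q₁=(0,1), q₂=(0,0), q₃=(1,0), q₄=(1,1), the space is parameterized by pairs (x_j, m_j) for j=5,…,k with 1 > x₅ > ⋯ > x_k > 0 and m₅ < ⋯ < m_k, a product of open simplices, hence homeomorphic to an open ball of dimension 2k−8. -/
/-!
Besides `q₁, …, q₄`, a normalized polygon is given by its vertices `p₅, …, p_k`, which together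
with `q₄` and `q₁` form a chain `q₄ = P 0, P 1, …, P (k + 1) = q₁`. The polygon is convex exactly
when the abscissae of this chain strictly decrease and the slopes of its edges strictly increase:
the chain is then the graph of a concave function lying above `y = 1`, and `q₂, q₃` lie below all
its edges. Such chains are parametrized freely by the ratios `x_j / x_{j+1} - 1 > 0` of consecutive
abscissae and the jumps `g_i > 0` of the slopes; the heights are recovered from these as `1` plus
the positive combination `∑ g_i T_i` of the tent functions `T_i` with a kink at `x_i`. Taking
logarithms of the `2k` positive parameters gives `ℝ^{2k}`.
-/

/-- Planar cross product. -/
def cross2 (a b : ℝ × ℝ) : ℝ := a.1 * b.2 - a.2 * b.1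

/-- A normalized convex `(k+4)`-gon, given by its cyclically ordered list of vertices:
the vertices are in strictly convex position (every other vertex lies strictly on the
positive side of each directed edge), and the first four vertices are the fixed
quadrilateral `q₁ = (0,1)`, `q₂ = (0,0)`, `q₃ = (1,0)`, `q₄ = (1,1)`. -/
def IsNormalizedConvexPolygon {k : ℕ} (v : Fin (k + 4) → ℝ × ℝ) : Prop :=
  (∀ i j : Fin (k + 4), j ≠ i → j ≠ i + 1 →
      0 < cross2 (v (i + 1) - v i) (v j - v i)) ∧
  v 0 = (0, 1) ∧ v 1 = (0, 0) ∧ v 2 = (1, 0) ∧ v 3 = (1, 1)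

open Set

section Pad

variable {α : Type*} {k : ℕ}

def pad (a b : α) (f : Fin k → α) : ℕ → α
  | 0 => a
  | n + 1 => if h : n < k then f ⟨n, h⟩ else b

variable {a b : α} {f : Fin k → α}

@[simp] lemma pad_zero : pad a b f 0 = a := rfl

@[simp] lemma pad_succ (j : Fin k) : pad a b f (j + 1) = f j := by simp [pad]

@[simp] lemma pad_succ_self : pad a b f (k + 1) = b := by simp [pad]

lemma pad_map {β : Type*} (g : α → β) (n : ℕ) : g (pad a b f n) = pad (g a) (g b) (g ∘ f) n := by
  cases n <;> simp only [pad]; split_ifs <;> rfl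

@[fun_prop]
lemma Continuous.pad {X : Type*} [TopologicalSpace X] [TopologicalSpace α] {F : X → Fin k → α}
    (hF : Continuous F) (n : ℕ) : Continuous fun q => pad a b (F q) n := by
  cases n with
  | zero => exact continuous_const
  | succ n =>
    simp only [_root_.pad]
    split_ifs
    · exact (continuous_apply _).comp hF
    · exact continuous_const

end Pad

lemma cross2_sub_right (d u w : ℝ × ℝ) : cross2 d (u - w) = cross2 d u - cross2 d w := by
  simp only [cross2, Prod.fst_sub, Prod.snd_sub]; ring

lemma cross2_add_right (d u w : ℝ × ℝ) : cross2 d (u + w) = cross2 d u + cross2 d w := by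
  simp only [cross2, Prod.fst_add, Prod.snd_add]; ring

lemma cross2_self (d : ℝ × ℝ) : cross2 d d = 0 := by
  simp only [cross2]; ring

lemma cross2_swap (d e : ℝ × ℝ) : cross2 e d = -cross2 d e := by
  simp only [cross2]; ring

noncomputable def edgeSlope (P : ℕ → ℝ × ℝ) (l : ℕ) : ℝ :=
  ((P (l + 1)).2 - (P l).2) / ((P (l + 1)).1 - (P l).1)

lemma cross2_edges (P : ℕ → ℝ × ℝ) {a c : ℕ} (ha : (P (a + 1)).1 ≠ (P a).1)
    (hc : (P (c + 1)).1 ≠ (P c).1) :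
    cross2 (P (a + 1) - P a) (P (c + 1) - P c) =
      ((P (a + 1)).1 - (P a).1) * ((P (c + 1)).1 - (P c).1) * (edgeSlope P c - edgeSlope P a) := by
  have ha' := sub_ne_zero.2 ha
  have hc' := sub_ne_zero.2 hc
  simp only [cross2, edgeSlope, Prod.fst_sub, Prod.snd_sub]
  field_simp

noncomputable def slopeJump (P : ℕ → ℝ × ℝ) (l : ℕ) : ℝ :=
  edgeSlope P (l + 1) - edgeSlope P l

lemma eq_of_slopeJump_eq {P Q : ℕ → ℝ × ℝ} {n : ℕ} (hx : ∀ c ≤ n + 1, (P c).1 = (Q c).1)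
    (hdec : ∀ l ≤ n, (P (l + 1)).1 < (P l).1) (h₀ : P 0 = Q 0) (hn : P (n + 1) = Q (n + 1))
    (hjump : ∀ l < n, slopeJump P l = slopeJump Q l) :
    ∀ c ≤ n + 1, P c = Q c := by
  set σ := edgeSlope P 0 - edgeSlope Q 0
  have hσ : ∀ l ≤ n, edgeSlope P l - edgeSlope Q l = σ := by
    intro l
    induction l with
    | zero => intro; rfl
    | succ l ih =>
      intro hl
      have := hjump l (by omega)
      rw [slopeJump, slopeJump] at this
      linarith [ih (by omega)]
  have hz : ∀ c ≤ n + 1, (P c).2 - (Q c).2 = σ * ((P c).1 - (P 0).1) := by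
    intro c
    induction c with
    | zero => intro; simp [h₀]
    | succ c ih =>
      intro hc
      have hd := hdec c (by omega)
      have eP : (P (c + 1)).2 - (P c).2 = edgeSlope P c * ((P (c + 1)).1 - (P c).1) := by
        rw [edgeSlope, div_mul_cancel₀ _ (sub_ne_zero.2 hd.ne)]
      have eQ : (Q (c + 1)).2 - (Q c).2 = edgeSlope Q c * ((P (c + 1)).1 - (P c).1) := by
        rw [edgeSlope, ← hx c (by omega), ← hx (c + 1) hc, div_mul_cancel₀ _ (sub_ne_zero.2 hd.ne)]
      linear_combination ih (by omega) + eP - eQ + ((P (c + 1)).1 - (P c).1) * hσ c (by omega)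
  have hσ₀ : σ = 0 := by
    have hlt : (P (n + 1)).1 < (P 0).1 :=
      strictAntiOn_Iic_of_succ_lt (ψ := fun c => (P c).1) (fun m hm => hdec m (by omega))
        (mem_Iic.2 (Nat.zero_le _)) (mem_Iic.2 le_rfl) n.succ_pos
    have := hz (n + 1) le_rfl
    rw [hn, sub_self, ← hn] at this
    exact (mul_eq_zero.1 this.symm).resolve_right (sub_ne_zero.2 hlt.ne)
  intro c hc
  refine Prod.ext (hx c hc) ?_
  have := hz c hc
  rwa [hσ₀, zero_mul, sub_eq_zero] at this

/-- `P 0, …, P (n + 1)` is the graph of a strictly concave piecewise linear function,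
traversed from right to left. -/
def IsConcaveChain (P : ℕ → ℝ × ℝ) (n : ℕ) : Prop :=
  (∀ l ≤ n, (P (l + 1)).1 < (P l).1) ∧ StrictMonoOn (edgeSlope P) (Iic n)

namespace IsConcaveChain

variable {P : ℕ → ℝ × ℝ} {n a c : ℕ}

lemma cross2_edge_edge_pos (hP : IsConcaveChain P n) (hac : a < c) (hc : c ≤ n) :
    0 < cross2 (P (a + 1) - P a) (P (c + 1) - P c) := by
  have ha := hP.1 a (by omega)
  have hc' := hP.1 c hc
  rw [cross2_edges P ha.ne hc'.ne]
  exact mul_pos (mul_pos_of_neg_of_neg (by linarith) (by linarith))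
    (sub_pos.2 (hP.2 (mem_Iic.2 (by omega)) (mem_Iic.2 hc) hac))

lemma cross2_pos (hP : IsConcaveChain P n) (ha : a ≤ n) (hc : c ≤ n + 1) (hca : c ≠ a)
    (hca' : c ≠ a + 1) : 0 < cross2 (P (a + 1) - P a) (P c - P a) := by
  set f : ℕ → ℝ := fun c => cross2 (P (a + 1) - P a) (P c - P a)
  have hstep (m : ℕ) : f (m + 1) = f m + cross2 (P (a + 1) - P a) (P (m + 1) - P m) := by
    simp only [f, ← sub_sub_sub_cancel_right (P (m + 1)) (P m) (P a), cross2_sub_right]; ring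
  rcases lt_or_gt_of_ne hca with hlt | hgt
  · have hanti : StrictAntiOn f (Iic a) := strictAntiOn_Iic_of_succ_lt fun m hm => by
      rw [Order.succ_eq_add_one, hstep, add_lt_iff_neg_left, cross2_swap, neg_lt_zero]
      exact hP.cross2_edge_edge_pos hm (by omega)
    have := hanti (show c ∈ Iic a from hlt.le) (show a ∈ Iic a from mem_Iic.2 le_rfl) hlt
    simpa [f, cross2] using this
  · have hmono : StrictMonoOn f (Icc (a + 1) (n + 1)) :=
      strictMonoOn_of_lt_succ ordConnected_Icc fun m _ hm hm' => by
        rw [Order.succ_eq_add_one, hstep, lt_add_iff_pos_right]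
        simp only [mem_Icc, Order.succ_eq_add_one] at hm hm'
        exact hP.cross2_edge_edge_pos (by omega) (by omega)
    have := hmono (show a + 1 ∈ Icc (a + 1) (n + 1) by simp; omega)
      (show c ∈ Icc (a + 1) (n + 1) by simp; omega) (by omega)
    simpa [f, cross2_self] using this

lemma cross2_nonneg (hP : IsConcaveChain P n) (ha : a ≤ n) (hc : c ≤ n + 1) :
    0 ≤ cross2 (P (a + 1) - P a) (P c - P a) := by
  by_cases hca : c = a
  · simp [hca, cross2]
  by_cases hca' : c = a + 1
  · rw [hca', cross2_self]
  exact (hP.cross2_pos ha hc hca hca').le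

lemma slopeJump_pos (hP : IsConcaveChain P n) {l : ℕ} (hl : l < n) : 0 < slopeJump P l :=
  sub_pos.2 (hP.2 (mem_Iic.2 hl.le) (mem_Iic.2 hl) l.lt_succ_self)

lemma strictAntiOn_fst (hP : IsConcaveChain P n) : StrictAntiOn (fun c => (P c).1) (Iic (n + 1)) :=
  strictAntiOn_Iic_of_succ_lt fun m hm => hP.1 m (by omega)

section Endpoints

variable (hP : IsConcaveChain P n) (h₀ : P 0 = (1, 1)) (hn : P (n + 1) = (0, 1))
include hP

include hn in
lemma fst_pos (hc : c ≤ n) : 0 < (P c).1 := by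
  have := hP.strictAntiOn_fst (mem_Iic.2 (by omega : c ≤ n + 1)) (mem_Iic.2 le_rfl)
    (Nat.lt_succ_of_le hc)
  simpa [hn] using this

include h₀ in
lemma fst_lt_one (hc : 0 < c) (hc' : c ≤ n + 1) : (P c).1 < 1 := by
  have := hP.strictAntiOn_fst (mem_Iic.2 (Nat.zero_le _)) (mem_Iic.2 hc') hc
  simpa [h₀] using this

include h₀ hn in
lemma one_le_snd (hc : c ≤ n + 1) : 1 ≤ (P c).2 := by
  rcases Nat.lt_or_ge c (n + 1) with hc | hc
  · have hA := hP.cross2_nonneg (a := c) (c := 0) (by omega) (by omega)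
    have hB := hP.cross2_nonneg (a := c) (c := n + 1) (by omega) le_rfl
    have hd := hP.1 c (by omega)
    have hx := hP.fst_pos hn (c := c) (by omega)
    have hx₁ : (P c).1 ≤ 1 := by
      rcases Nat.eq_zero_or_pos c with rfl | hc₀
      · simp [h₀]
      · exact (hP.fst_lt_one h₀ hc₀ (by omega)).le
    rw [h₀] at hA
    rw [hn] at hB
    simp only [cross2, Prod.fst_sub, Prod.snd_sub] at hA hB
    nlinarith [mul_nonneg hx.le hA, mul_nonneg (sub_nonneg.2 hx₁) hB]
  · simp [show c = n + 1 by omega, hn]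

lemma cross2_sub_pos (ha : a ≤ n) (hc : c ≤ n + 1) {t : ℝ} (ht : 0 < t) :
    0 < cross2 (P (a + 1) - P a) (P c - (0, t) - P a) := by
  have h := hP.cross2_nonneg ha hc
  have hd := hP.1 a ha
  rw [sub_right_comm, cross2_sub_right]
  simp only [cross2, Prod.fst_sub] at h ⊢
  nlinarith

end Endpoints

end IsConcaveChain

section Polygon

variable {k : ℕ}

def polygonOf (p : Fin k → ℝ × ℝ) : Fin (k + 4) → ℝ × ℝ :=
  Fin.cons (0, 1) <| Fin.cons (0, 0) <| Fin.cons (1, 0) <| Fin.cons (1, 1) p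

@[simp] lemma polygonOf_zero (p : Fin k → ℝ × ℝ) : polygonOf p 0 = (0, 1) := rfl
@[simp] lemma polygonOf_one (p : Fin k → ℝ × ℝ) : polygonOf p 1 = (0, 0) := rfl
@[simp] lemma polygonOf_two (p : Fin k → ℝ × ℝ) : polygonOf p 2 = (1, 0) := rfl
@[simp] lemma polygonOf_three (p : Fin k → ℝ × ℝ) : polygonOf p 3 = (1, 1) := rfl

def innerVertices (v : Fin (k + 4) → ℝ × ℝ) : Fin k → ℝ × ℝ :=
  fun j => v (j.addNat 4)

/-- The vertices of `polygonOf p` from `q₄` to `q₁`. -/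
def upperChain (p : Fin k → ℝ × ℝ) : ℕ → ℝ × ℝ :=
  pad (1, 1) (0, 1) p

/-- The position of `upperChain p c` in `polygonOf p`, for `c ≤ k + 1`. -/
def chainIndex (k c : ℕ) : Fin (k + 4) :=
  Fin.ofNat (k + 4) (c + 3)

lemma chainIndex_add_one (c : ℕ) : chainIndex k c + 1 = chainIndex k (c + 1) := by
  ext; simp only [chainIndex, Fin.val_add, Fin.val_ofNat, Fin.val_one', ← Nat.add_mod]

lemma val_chainIndex {c : ℕ} (hc : c ≤ k + 1) :
    (chainIndex k c : ℕ) = if c = k + 1 then 0 else c + 3 := by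
  simp only [chainIndex, Fin.val_ofNat]
  split_ifs with h
  · simp [h]
  · exact Nat.mod_eq_of_lt (by omega)

lemma chainIndex_inj {c c' : ℕ} (hc : c ≤ k + 1) (hc' : c' ≤ k + 1) :
    chainIndex k c = chainIndex k c' ↔ c = c' := by
  rw [Fin.ext_iff, val_chainIndex hc, val_chainIndex hc']
  split_ifs <;> simp <;> omega

lemma eq_one_or_eq_two_or_exists_chainIndex (i : Fin (k + 4)) :
    i = 1 ∨ i = 2 ∨ ∃ c ≤ k + 1, i = chainIndex k c := by
  obtain ⟨i, hi⟩ := i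
  rcases (by omega : i = 0 ∨ i = 1 ∨ i = 2 ∨ 3 ≤ i) with rfl | rfl | rfl | h
  · exact .inr (.inr ⟨k + 1, le_rfl, Fin.ext (by rw [val_chainIndex le_rfl]; simp)⟩)
  · exact .inl rfl
  · exact .inr (.inl rfl)
  · refine .inr (.inr ⟨i - 3, by omega, Fin.ext ?_⟩)
    rw [val_chainIndex (by omega)]
    split_ifs <;> simp <;> omega

lemma chainIndex_ne_one {c : ℕ} (hc : c ≤ k + 1) : chainIndex k c ≠ 1 := by
  rw [Ne, Fin.ext_iff, val_chainIndex hc, show ((1 : Fin (k + 4)) : ℕ) = 1 from rfl]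
  split_ifs <;> simp

lemma chainIndex_ne_two {c : ℕ} (hc : c ≤ k + 1) : chainIndex k c ≠ 2 := by
  rw [Ne, Fin.ext_iff, val_chainIndex hc, show ((2 : Fin (k + 4)) : ℕ) = 2 from rfl]
  split_ifs <;> simp

lemma chainIndex_succ_self : chainIndex k (k + 1) = 0 :=
  Fin.ext (by rw [val_chainIndex le_rfl, if_pos rfl]; rfl)

lemma polygonOf_chainIndex (p : Fin k → ℝ × ℝ) {c : ℕ} (hc : c ≤ k + 1) :
    polygonOf p (chainIndex k c) = upperChain p c := by
  rcases Nat.eq_zero_or_pos c with rfl | hc₀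
  · rfl
  rcases hc.lt_or_eq with hc | rfl
  · obtain ⟨j, rfl⟩ : ∃ j : Fin k, c = j + 1 := ⟨⟨c - 1, by omega⟩, by simp; omega⟩
    have : chainIndex k (j + 1) = j.addNat 4 :=
      Fin.ext (by rw [val_chainIndex (by omega), if_neg (by omega)]; simp)
    rw [this, upperChain, pad_succ]
    rfl
  · rw [chainIndex_succ_self, upperChain, pad_succ_self]
    rfl

lemma IsConcaveChain.cross2_polygonOf_pos {p : Fin k → ℝ × ℝ}
    (hP : IsConcaveChain (upperChain p) k) {a : ℕ} (ha : a ≤ k) {j : Fin (k + 4)}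
    (hj : j ≠ chainIndex k a) (hj' : j ≠ chainIndex k (a + 1)) :
    0 < cross2 (upperChain p (a + 1) - upperChain p a) (polygonOf p j - upperChain p a) := by
  rcases eq_one_or_eq_two_or_exists_chainIndex j with rfl | rfl | ⟨c, hc, rfl⟩
  · convert hP.cross2_sub_pos (c := k + 1) ha le_rfl one_pos using 3
    simp [upperChain]
  · convert hP.cross2_sub_pos (c := 0) ha (by omega) one_pos using 3
    simp [upperChain]
  · rw [Ne, chainIndex_inj hc (by omega)] at hj hj'
    rw [polygonOf_chainIndex p hc]
    exact hP.cross2_pos ha hc hj hj'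

lemma IsConcaveChain.isNormalizedConvexPolygon {p : Fin k → ℝ × ℝ}
    (hP : IsConcaveChain (upperChain p) k) : IsNormalizedConvexPolygon (polygonOf p) := by
  have h₀ : upperChain p 0 = (1, 1) := rfl
  have hn : upperChain p (k + 1) = (0, 1) := pad_succ_self
  refine ⟨fun i j hji hji' => ?_, rfl, rfl, rfl, rfl⟩
  rcases eq_one_or_eq_two_or_exists_chainIndex i with rfl | rfl | ⟨a, ha, rfl⟩
  · show 0 < cross2 ((1, 0) - (0, 0)) (polygonOf p j - (0, 0))
    rcases eq_one_or_eq_two_or_exists_chainIndex j with rfl | rfl | ⟨c, hc, rfl⟩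
    · exact absurd rfl hji
    · exact absurd rfl hji'
    · have := hP.one_le_snd h₀ hn hc
      rw [polygonOf_chainIndex p hc]
      norm_num [cross2]
      linarith
  · show 0 < cross2 ((1, 1) - (1, 0)) (polygonOf p j - (1, 0))
    rcases eq_one_or_eq_two_or_exists_chainIndex j with rfl | rfl | ⟨c, hc, rfl⟩
    · simp [cross2]
    · exact absurd rfl hji
    · have hc₀ : c ≠ 0 := by rintro rfl; exact hji' rfl
      have := hP.fst_lt_one h₀ (Nat.pos_of_ne_zero hc₀) hc
      rw [polygonOf_chainIndex p hc]
      simp only [cross2, Prod.fst_sub, Prod.snd_sub]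
      linarith
  rcases ha.lt_or_eq with ha | rfl
  · rw [chainIndex_add_one] at hji' ⊢
    rw [polygonOf_chainIndex p ha.le, polygonOf_chainIndex p (by omega)]
    exact hP.cross2_polygonOf_pos (by omega) hji hji'
  rw [chainIndex_succ_self] at hji hji' ⊢
  show 0 < cross2 ((0, 0) - (0, 1)) (polygonOf p j - (0, 1))
  rcases eq_one_or_eq_two_or_exists_chainIndex j with rfl | rfl | ⟨c, hc, rfl⟩
  · exact absurd rfl hji'
  · simp [cross2]
  · have hck : c ≠ k + 1 := by rintro rfl; exact hji chainIndex_succ_self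
    have := hP.fst_pos hn (c := c) (by omega)
    rw [polygonOf_chainIndex p hc]
    simp only [cross2, Prod.fst_sub, Prod.snd_sub]
    linarith

section Convex

variable {p : Fin k → ℝ × ℝ} (hv : IsNormalizedConvexPolygon (polygonOf p))
include hv

lemma IsNormalizedConvexPolygon.cross2_polygonOf_pos {a : ℕ} (ha : a ≤ k) {j : Fin (k + 4)}
    (hj : j ≠ chainIndex k a) (hj' : j ≠ chainIndex k (a + 1)) :
    0 < cross2 (upperChain p (a + 1) - upperChain p a) (polygonOf p j - upperChain p a) := by
  have := hv.1 (chainIndex k a) j hj (by rwa [chainIndex_add_one])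
  rwa [chainIndex_add_one, polygonOf_chainIndex p (by omega),
    polygonOf_chainIndex p (by omega)] at this

lemma IsNormalizedConvexPolygon.upperChain_mem_Icc_prod_Ioi {c : ℕ} (hc : c ≤ k) :
    upperChain p c ∈ Icc (0 : ℝ) 1 ×ˢ Ioi 0 := by
  rcases Nat.eq_zero_or_pos c with rfl | hc₀
  · norm_num [upperChain]
  have hne {c' : ℕ} (hc' : c' ≤ k + 1) (h : c' ≠ c) : chainIndex k c ≠ chainIndex k c' := by
    rw [Ne, chainIndex_inj (by omega) hc']; omega
  have hq₁ := hv.1 0 (chainIndex k c) (chainIndex_succ_self (k := k) ▸ hne le_rfl (by omega))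
    (chainIndex_ne_one (by omega))
  have hq₂ := hv.1 1 (chainIndex k c) (chainIndex_ne_one (by omega)) (chainIndex_ne_two (by omega))
  have hq₃ := hv.1 2 (chainIndex k c) (chainIndex_ne_two (by omega))
    (hne (c' := 0) (by omega) (by omega))
  rw [polygonOf_chainIndex p (by omega), zero_add] at hq₁
  rw [polygonOf_chainIndex p (by omega), show (1 : Fin (k + 4)) + 1 = 2 from rfl] at hq₂
  rw [polygonOf_chainIndex p (by omega), show (2 : Fin (k + 4)) + 1 = 3 from rfl] at hq₃
  norm_num [cross2] at hq₁ hq₂ hq₃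
  exact ⟨⟨hq₁.le, hq₃.le⟩, hq₂⟩

lemma IsNormalizedConvexPolygon.upperChain_fst_lt {a : ℕ} (ha : a ≤ k) :
    (upperChain p (a + 1)).1 < (upperChain p a).1 := by
  have h₁ := hv.cross2_polygonOf_pos ha (chainIndex_ne_one (by omega)).symm
    (chainIndex_ne_one (by omega)).symm
  have h₂ := hv.cross2_polygonOf_pos ha (chainIndex_ne_two (by omega)).symm
    (chainIndex_ne_two (by omega)).symm
  obtain ⟨⟨hx₀, hx₁⟩, hy⟩ := hv.upperChain_mem_Icc_prod_Ioi ha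
  simp only [polygonOf_one, polygonOf_two, cross2, Prod.fst_sub, Prod.snd_sub] at h₁ h₂
  -- weighting the two cross products by `1 - x` and `x`, where `x = (upperChain p a).1`,
  -- leaves this product
  have : 0 < ((upperChain p a).1 - (upperChain p (a + 1)).1) * (upperChain p a).2 := by
    rcases le_total ((upperChain p (a + 1)).2 - (upperChain p a).2) 0 with h | h
    · nlinarith [mul_nonneg hx₀ (neg_nonneg.2 h)]
    · nlinarith [mul_nonneg (sub_nonneg.2 hx₁) h]
  linarith [pos_of_mul_pos_left this hy.le]

lemma IsNormalizedConvexPolygon.isConcaveChain : IsConcaveChain (upperChain p) k := by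
  refine ⟨fun a ha => hv.upperChain_fst_lt ha, strictMonoOn_Iic_of_lt_succ fun m hm => ?_⟩
  set P := upperChain p
  have h := hv.cross2_polygonOf_pos hm.le (j := chainIndex k (m + 1 + 1))
    (by rw [Ne, chainIndex_inj (by omega) (by omega)]; omega)
    (by rw [Ne, chainIndex_inj (by omega) (by omega)]; omega)
  have hm₀ := hv.upperChain_fst_lt hm.le
  have hm₁ := hv.upperChain_fst_lt hm
  rw [polygonOf_chainIndex p (by omega), ← sub_add_sub_cancel (P (m + 1 + 1)) (P (m + 1)) (P m),
    cross2_add_right, cross2_self, add_zero, cross2_edges P hm₀.ne hm₁.ne] at h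
  rw [Order.succ_eq_add_one, ← sub_pos]
  exact pos_of_mul_pos_right h (mul_pos_of_neg_of_neg (by linarith) (by linarith)).le

end Convex

lemma polygonOf_innerVertices {v : Fin (k + 4) → ℝ × ℝ} (hv : IsNormalizedConvexPolygon v) :
    polygonOf (innerVertices v) = v := by
  obtain ⟨-, h₀, h₁, h₂, h₃⟩ := hv
  funext i
  rcases i with ⟨_ | _ | _ | _ | i, hi⟩
  · exact h₀.symm
  · exact h₁.symm
  · exact h₂.symm
  · exact h₃.symm
  · rfl

lemma IsNormalizedConvexPolygon.isConcaveChain_innerVertices {v : Fin (k + 4) → ℝ × ℝ}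
    (hv : IsNormalizedConvexPolygon v) : IsConcaveChain (upperChain (innerVertices v)) k := by
  rw [← polygonOf_innerVertices hv] at hv
  exact hv.isConcaveChain

def polygonHomeomorph :
    {v : Fin (k + 4) → ℝ × ℝ // IsNormalizedConvexPolygon v} ≃ₜ
      {p : Fin k → ℝ × ℝ // IsConcaveChain (upperChain p) k} where
  toFun v := ⟨innerVertices v, v.2.isConcaveChain_innerVertices⟩
  invFun p := ⟨polygonOf p, p.2.isNormalizedConvexPolygon⟩
  left_inv v := Subtype.ext (polygonOf_innerVertices v.2)
  right_inv p := rfl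
  continuous_toFun := by
    have : Continuous (innerVertices (k := k)) := continuous_pi fun _ => continuous_apply _
    exact (this.comp continuous_subtype_val).subtype_mk _
  continuous_invFun := by unfold polygonOf; fun_prop

end Polygon

section Parameters

variable {k : ℕ}

/-- `1 > x 0 > x 1 > ⋯ > x (k - 1) > 0`. -/
def IsDescending (x : Fin k → ℝ) : Prop :=
  ∀ l ≤ k, pad 1 0 x (l + 1) < pad 1 0 x l

lemma IsDescending.pad_pos {x : Fin k → ℝ} (hx : IsDescending x) {n : ℕ} (hn : n ≤ k) :
    0 < pad 1 0 x n := by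
  have := strictAntiOn_Iic_of_succ_lt (ψ := pad 1 0 x) (fun m hm => hx m (by omega))
    (mem_Iic.2 (by omega : n ≤ k + 1)) (mem_Iic.2 le_rfl) (by omega)
  rwa [pad_succ_self] at this

lemma IsDescending.pos {x : Fin k → ℝ} (hx : IsDescending x) (j : Fin k) : 0 < x j := by
  simpa using hx.pad_pos (n := j + 1) j.2

lemma IsConcaveChain.isDescending_fst {p : Fin k → ℝ × ℝ} (hP : IsConcaveChain (upperChain p) k) :
    IsDescending fun j => (p j).1 := by
  intro l hl
  have := hP.1 l hl
  rwa [upperChain, pad_map Prod.fst, pad_map Prod.fst] at this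

/-- The heights of the chain over the abscissae `X` whose slope increases by `g i` at the vertex
`i + 1`: a sum of tent functions, the discrete Green's function of the second difference. -/
noncomputable def tentHeight (X : ℕ → ℝ) (g : Fin k → ℝ) (c : ℕ) : ℝ :=
  1 + ∑ i : Fin k, g i * if (i : ℕ) + 1 ≤ c then X c * (1 - X (i + 1)) else X (i + 1) * (1 - X c)

noncomputable def tentSlope (X : ℕ → ℝ) (g : Fin k → ℝ) (c : ℕ) : ℝ :=
  ∑ i : Fin k, g i * ((if (i : ℕ) + 1 ≤ c then 1 else 0) - X (i + 1))

lemma tentHeight_succ_sub (X : ℕ → ℝ) (g : Fin k → ℝ) (c : ℕ) :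
    tentHeight X g (c + 1) - tentHeight X g c = (X (c + 1) - X c) * tentSlope X g c := by
  rw [tentHeight, tentHeight, tentSlope, add_sub_add_left_eq_sub, ← Finset.sum_sub_distrib,
    Finset.mul_sum]
  refine Finset.sum_congr rfl fun i _ => ?_
  rcases lt_trichotomy ((i : ℕ) + 1) (c + 1) with h | h | h
  · have h' : (i : ℕ) + 1 ≤ c := by omega
    rw [if_pos h.le, if_pos h', if_pos h']; ring
  · have h' : ¬(i : ℕ) + 1 ≤ c := by omega
    rw [if_pos h.le, if_neg h', if_neg h', h]; ring
  · have h' : ¬(i : ℕ) + 1 ≤ c := by omega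
    rw [if_neg (by omega), if_neg h', if_neg h']; ring

lemma tentSlope_succ_sub (X : ℕ → ℝ) (g : Fin k → ℝ) {c : ℕ} (hc : c < k) :
    tentSlope X g (c + 1) - tentSlope X g c = g ⟨c, hc⟩ := by
  simp only [tentSlope, ← Finset.sum_sub_distrib]
  rw [Finset.sum_eq_single ⟨c, hc⟩]
  · rw [if_pos le_rfl, if_neg (by simp)]; ring
  · intro i _ hi
    have : (i : ℕ) ≠ c := fun h => hi (Fin.ext h)
    split_ifs <;> first | (exfalso; omega) | ring
  · simp

noncomputable def chainOfParams (x g : Fin k → ℝ) : Fin k → ℝ × ℝ :=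
  fun j => (x j, tentHeight (pad 1 0 x) g (j + 1))

lemma upperChain_chainOfParams (x g : Fin k → ℝ) {c : ℕ} (hc : c ≤ k + 1) :
    upperChain (chainOfParams x g) c = (pad 1 0 x c, tentHeight (pad 1 0 x) g c) := by
  rcases Nat.eq_zero_or_pos c with rfl | hc₀
  · simp [upperChain, tentHeight]
  rcases hc.lt_or_eq with hc | rfl
  · obtain ⟨j, rfl⟩ : ∃ j : Fin k, c = j + 1 := ⟨⟨c - 1, by omega⟩, by simp; omega⟩
    simp [upperChain, chainOfParams]
  · simp [upperChain, tentHeight]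

lemma edgeSlope_chainOfParams (x g : Fin k → ℝ) {c : ℕ} (hc : c ≤ k)
    (hx : pad 1 0 x (c + 1) ≠ pad 1 0 x c) :
    edgeSlope (upperChain (chainOfParams x g)) c = tentSlope (pad 1 0 x) g c := by
  rw [edgeSlope, upperChain_chainOfParams x g (by omega), upperChain_chainOfParams x g (by omega),
    tentHeight_succ_sub, mul_div_cancel_left₀ _ (sub_ne_zero.2 hx)]

lemma slopeJump_chainOfParams {x : Fin k → ℝ} (hx : IsDescending x) (g : Fin k → ℝ)
    {l : ℕ} (hl : l < k) : slopeJump (upperChain (chainOfParams x g)) l = g ⟨l, hl⟩ := by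
  rw [slopeJump, edgeSlope_chainOfParams x g hl (hx (l + 1) hl).ne,
    edgeSlope_chainOfParams x g hl.le (hx l hl.le).ne, tentSlope_succ_sub]

lemma IsDescending.isConcaveChain_chainOfParams {x g : Fin k → ℝ} (hx : IsDescending x)
    (hg : ∀ j, 0 < g j) : IsConcaveChain (upperChain (chainOfParams x g)) k := by
  refine ⟨fun l hl => ?_, strictMonoOn_Iic_of_lt_succ fun m hm => ?_⟩
  · rw [upperChain_chainOfParams x g (by omega), upperChain_chainOfParams x g (by omega)]
    exact hx l hl
  · rw [Order.succ_eq_add_one, ← sub_pos, ← slopeJump, slopeJump_chainOfParams hx g hm]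
    exact hg _

lemma IsConcaveChain.chainOfParams_eq {p : Fin k → ℝ × ℝ} (hP : IsConcaveChain (upperChain p) k) :
    chainOfParams (fun j => (p j).1) (fun j => slopeJump (upperChain p) j) = p := by
  set x := fun j => (p j).1
  set g := fun j : Fin k => slopeJump (upperChain p) j
  have hx : IsDescending x := hP.isDescending_fst
  have hfst (c : ℕ) : (upperChain p c).1 = pad 1 0 x c := pad_map Prod.fst c
  have key := eq_of_slopeJump_eq (P := upperChain (chainOfParams x g)) (Q := upperChain p) (n := k)
    (fun c hc => ?_) (fun l hl => ?_) rfl (by simp [upperChain])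
    (fun l hl => slopeJump_chainOfParams hx g hl)
  · funext j
    simpa [upperChain] using key (j + 1) (by omega)
  · rw [upperChain_chainOfParams _ _ hc, hfst]
  · rw [upperChain_chainOfParams _ _ (by omega), upperChain_chainOfParams _ _ (by omega)]
    exact hx l hl

lemma continuous_tentHeight {X : Type*} [TopologicalSpace X] {F G : X → Fin k → ℝ}
    (hF : Continuous F) (hG : Continuous G) (c : ℕ) :
    Continuous fun q => tentHeight (pad 1 0 (F q)) (G q) c := by
  refine continuous_const.add (continuous_finsetSum _ fun i _ => ?_)
  split_ifs <;> fun_prop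

noncomputable def chainHomeomorph :
    {p : Fin k → ℝ × ℝ // IsConcaveChain (upperChain p) k} ≃ₜ
      {x : Fin k → ℝ // IsDescending x} × (Fin k → Ioi (0 : ℝ)) where
  toFun p := (⟨fun j => (p.1 j).1, p.2.isDescending_fst⟩,
    fun j => ⟨slopeJump (upperChain p.1) j, p.2.slopeJump_pos j.2⟩)
  invFun q := ⟨chainOfParams q.1.1 fun j => q.2 j,
    q.1.2.isConcaveChain_chainOfParams fun j => (q.2 j).2⟩
  left_inv p := Subtype.ext p.2.chainOfParams_eq
  right_inv q := Prod.ext rfl (funext fun j => Subtype.ext (slopeJump_chainOfParams q.1.2 _ j.2))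
  continuous_toFun := by
    have hslope (l : ℕ) (hl : l ≤ k) :
        Continuous fun p : {p : Fin k → ℝ × ℝ // IsConcaveChain (upperChain p) k} =>
          edgeSlope (upperChain p.1) l := by
      have hP (c : ℕ) : Continuous fun p : {p : Fin k → ℝ × ℝ // IsConcaveChain (upperChain p) k} =>
          upperChain p.1 c := continuous_subtype_val.pad c
      exact ((hP _).snd.sub (hP _).snd).div ((hP _).fst.sub (hP _).fst)
        fun p => sub_ne_zero.2 (p.2.1 l hl).ne
    refine .prodMk (.subtype_mk (continuous_pi fun j => ?_) _)
      (continuous_pi fun j => .subtype_mk ?_ _)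
    · exact ((continuous_apply j).comp continuous_subtype_val).fst
    · exact (hslope _ j.2).sub (hslope _ j.2.le)
  continuous_invFun := by
    have hx : Continuous fun q : {x : Fin k → ℝ // IsDescending x} × (Fin k → Ioi (0 : ℝ)) =>
      q.1.1 := continuous_subtype_val.comp continuous_fst
    refine .subtype_mk (continuous_pi fun j => .prodMk ((continuous_apply j).comp hx) ?_) _
    exact continuous_tentHeight hx (by fun_prop) _

end Parameters

section Descending

variable {k : ℕ}

/-- `descendingSeq u n = ∏ i < n, (1 + u i)⁻¹` for `n ≤ k`, and `0` beyond. -/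
noncomputable def descendingSeq (u : Fin k → ℝ) : ℕ → ℝ
  | 0 => 1
  | n + 1 => if h : n < k then descendingSeq u n / (1 + u ⟨n, h⟩) else 0

lemma descendingSeq_succ (u : Fin k → ℝ) {n : ℕ} (hn : n < k) :
    descendingSeq u (n + 1) = descendingSeq u n / (1 + u ⟨n, hn⟩) :=
  dif_pos hn

lemma pad_descendingSeq (u : Fin k → ℝ) :
    pad 1 0 (fun j : Fin k => descendingSeq u (j + 1)) = descendingSeq u := by
  funext n
  cases n with
  | zero => rfl
  | succ n =>
    simp only [pad]
    split_ifs with h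
    · rfl
    · simp [descendingSeq, h]

lemma descendingSeq_pos {u : Fin k → ℝ} (hu : ∀ i, 0 < u i) {n : ℕ} (hn : n ≤ k) :
    0 < descendingSeq u n := by
  induction n with
  | zero => exact one_pos
  | succ n ih =>
    rw [descendingSeq_succ _ hn]
    exact div_pos (ih (by omega)) (by linarith [hu ⟨n, by omega⟩])

lemma isDescending_descendingSeq {u : Fin k → ℝ} (hu : ∀ i, 0 < u i) :
    IsDescending fun j : Fin k => descendingSeq u (j + 1) := by
  intro l hl
  rw [pad_descendingSeq, descendingSeq]
  split_ifs with h
  · exact div_lt_self (descendingSeq_pos hu hl) (by linarith [hu ⟨l, h⟩])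
  · exact descendingSeq_pos hu hl

noncomputable def descentRatio (x : Fin k → ℝ) (j : Fin k) : ℝ :=
  pad 1 0 x j / x j - 1

lemma IsDescending.descendingSeq_descentRatio {x : Fin k → ℝ} (hx : IsDescending x) {n : ℕ}
    (hn : n ≤ k) : descendingSeq (descentRatio x) n = pad 1 0 x n := by
  induction n with
  | zero => rfl
  | succ n ih =>
    rw [descendingSeq_succ _ hn, ih (by omega), descentRatio, add_sub_cancel,
      div_div_cancel₀ (hx.pad_pos (by omega)).ne']
    exact (pad_succ _).symm

lemma continuous_descendingSeq (n : ℕ) :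
    Continuous fun u : Fin k → Ioi (0 : ℝ) => descendingSeq (fun i => (u i : ℝ)) n := by
  induction n with
  | zero => exact continuous_const
  | succ n ih =>
    simp only [descendingSeq]
    split_ifs with h
    · exact ih.div (by fun_prop) fun u => by linarith [(u ⟨n, h⟩).2.out]
    · exact continuous_const

noncomputable def descendingHomeomorph :
    {x : Fin k → ℝ // IsDescending x} ≃ₜ (Fin k → Ioi (0 : ℝ)) where
  toFun x j := ⟨descentRatio x.1 j, by
    have := x.2 j j.2.le
    rw [pad_succ] at this
    rw [mem_Ioi, descentRatio, sub_pos, one_lt_div (x.2.pos j)]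
    exact this⟩
  invFun u := ⟨fun j => descendingSeq (fun i => (u i : ℝ)) (j + 1),
    isDescending_descendingSeq fun i => (u i).2⟩
  left_inv x := Subtype.ext <| funext fun j => by
    simpa using x.2.descendingSeq_descentRatio (n := j + 1) j.2
  right_inv u := funext fun j => Subtype.ext <| by
    show descentRatio (fun j : Fin k => descendingSeq (fun i => (u i : ℝ)) (j + 1)) j = u j
    rw [descentRatio, pad_descendingSeq, descendingSeq_succ _ j.2,
      div_div_cancel₀ (descendingSeq_pos (fun i => (u i).2) j.2.le).ne', add_sub_cancel_left]
  continuous_toFun := continuous_pi fun j => by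
    have hx : Continuous fun x : {x : Fin k → ℝ // IsDescending x} => x.1 j :=
      (continuous_apply j).comp continuous_subtype_val
    exact .subtype_mk (((continuous_subtype_val.pad _).div hx fun x => (x.2.pos j).ne').sub
      continuous_const) _
  continuous_invFun := .subtype_mk (continuous_pi fun j => continuous_descendingSeq _) _

end Descending

/-- The space of normalized convex `(k+4)`-gons in the projective plane is homeomorphic to
`ℝ^{2(k+4)-8} = ℝ^{2k}`. -/
theorem normalized_polygon_space_homeomorphic_euclidean (k : ℕ) :
    Nonempty ({v : Fin (k + 4) → ℝ × ℝ // IsNormalizedConvexPolygon v} ≃ₜ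
      (Fin (2 * k) → ℝ)) := by
  let log : (Fin k → Ioi (0 : ℝ)) ≃ₜ (Fin k → ℝ) :=
    .piCongrRight fun _ => Real.expOrderIso.toHomeomorph.symm
  let append : (Fin k → ℝ) × (Fin k → ℝ) ≃ₜ (Fin (2 * k) → ℝ) :=
    Homeomorph.sumArrowHomeomorphProdArrow.symm.trans
      (.piCongrLeft (Y := fun _ => ℝ) (finSumFinEquiv.trans (finCongr (two_mul k).symm)))
  exact ⟨polygonHomeomorph.trans <| chainHomeomorph.trans <|
    (descendingHomeomorph.prodCongr (.refl _)).trans <| (log.prodCongr log).trans append⟩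
end

section
/- If a sequence of compact convex subsets of ℝ^N converges in the Hausdorff metric to a compact convex set K, then every extreme point of K is a limit of extreme points of the sets in the sequence. -/
/-!
Let `x` be an extreme point of `L` and `ε > 0`. Since `x` is extreme, it does not lie in the
convex hull `D` of `L \ ball x (ε / 2)`, which is compact by Carathéodory's theorem, so some
closed `δ`-thickening of `D` still misses `x`. If `K` is `η`-close to `L` for small `η` and all
extreme points of `K` were `ε`-far from `x`, they would lie in the convex closed set
`cthickening η D`; by Krein–Milman so would `K`, and then `x`, being `η`-close to `K`, would lie
in `cthickening δ D`.
-/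

open Filter Metric Set Module Topology

theorem IsCompact.convexHull {E : Type*} [AddCommGroup E] [Module ℝ E] [TopologicalSpace E]
    [IsTopologicalAddGroup E] [ContinuousSMul ℝ E] [FiniteDimensional ℝ E] {s : Set E}
    (hs : IsCompact s) : IsCompact (convexHull ℝ s) := by
  set combo : (k : ℕ) → (Fin k → ℝ) × (Fin k → E) → E := fun k p => ∑ i, p.1 i • p.2 i
  have hcover : _root_.convexHull ℝ s = ⋃ k ∈ Finset.range (finrank ℝ E + 2),
      combo k '' (stdSimplex ℝ (Fin k) ×ˢ univ.pi fun _ => s) := by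
    refine Subset.antisymm (fun x hx => ?_) ?_
    · obtain ⟨ι, _, z, w, hzs, hz, hw₀, hw₁, rfl⟩ := eq_pos_convex_span_of_mem_convexHull hx
      have hcard : Fintype.card ι < finrank ℝ E + 2 :=
        Nat.lt_succ_of_le (hz.card_le_finrank_succ.trans (by gcongr; exact Submodule.finrank_le _))
      let σ := (Fintype.equivFin ι).symm
      refine mem_biUnion (Finset.mem_range.2 hcard) ⟨(w ∘ σ, z ∘ σ), ⟨⟨fun i => (hw₀ _).le, ?_⟩,
        fun i _ => hzs (mem_range_self _)⟩, ?_⟩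
      · simpa only [Function.comp_apply, σ.sum_comp] using hw₁
      · exact σ.sum_comp fun i => w i • z i
    · simp only [iUnion_subset_iff]
      rintro k - _ ⟨⟨w, z⟩, ⟨hw, hz⟩, rfl⟩
      exact mem_convexHull_of_exists_fintype w z hw.1 hw.2 (fun i => hz i trivial) rfl
  rw [hcover]
  exact (Finset.range _).isCompact_biUnion fun k _ =>
    ((isCompact_stdSimplex ℝ (Fin k)).prod (isCompact_univ_pi fun _ => hs)).image (by fun_prop)

theorem IsCompact.subset_of_extremePoints_subset {E : Type*} [AddCommGroup E] [Module ℝ E]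
    [TopologicalSpace E] [T2Space E] [IsTopologicalAddGroup E] [ContinuousSMul ℝ E]
    [LocallyConvexSpace ℝ E] {K C : Set E} (hK : IsCompact K) (hKconv : Convex ℝ K)
    (hC : IsClosed C) (hCconv : Convex ℝ C) (h : K.extremePoints ℝ ⊆ C) : K ⊆ C := by
  rw [← closure_convexHull_extremePoints hK hKconv]
  exact hC.closure_subset_iff.2 (convexHull_min h hCconv)

theorem subset_cthickening_of_hausdorffDist_le {α : Type*} [PseudoMetricSpace α] {s t : Set α}
    {r : ℝ} (hfin : hausdorffEDist s t ≠ ⊤) (hr : hausdorffDist s t ≤ r) :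
    s ⊆ cthickening r t := fun x hx => by
  rw [mem_cthickening_iff]
  calc infEDist x t ≤ hausdorffEDist s t := infEDist_le_hausdorffEDist_of_mem hx
    _ = ENNReal.ofReal (hausdorffDist s t) := (ENNReal.ofReal_toReal hfin).symm
    _ ≤ ENNReal.ofReal r := ENNReal.ofReal_le_ofReal hr

theorem exists_seq_tendsto_of_eventually_inter_ball_nonempty {α : Type*} [PseudoMetricSpace α]
    {x : α} {E : ℕ → Set α} (hne : ∀ n, (E n).Nonempty)
    (h : ∀ ε > 0, ∀ᶠ n in atTop, (E n ∩ ball x ε).Nonempty) :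
    ∃ v : ℕ → α, (∀ n, v n ∈ E n) ∧ Tendsto v atTop (𝓝 x) := by
  have hdist : Tendsto (fun n => infDist x (E n)) atTop (𝓝 0) := by
    refine Metric.tendsto_nhds.2 fun ε hε => ?_
    filter_upwards [h ε hε] with n ⟨e, he, hex⟩
    rw [Real.dist_0_eq_abs, abs_of_nonneg infDist_nonneg]
    exact (infDist_le_dist_of_mem he).trans_lt (mem_ball'.1 hex)
  choose v hv hvx using fun n =>
    (infDist_lt_iff (hne n)).1 (lt_add_of_pos_right (infDist x (E n)) (Nat.one_div_pos_of_nat))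
  refine ⟨v, hv, tendsto_iff_dist_tendsto_zero.2 ?_⟩
  refine squeeze_zero (fun n => dist_nonneg) (fun n => (dist_comm _ _).trans_le (hvx n).le) ?_
  simpa using hdist.add tendsto_one_div_add_atTop_nhds_zero_nat

section NormedSpace

variable {E : Type*} [NormedAddCommGroup E] [NormedSpace ℝ E]

theorem notMem_convexHull_sdiff_ball {L : Set E} {x : E} {r : ℝ} (hL : Convex ℝ L)
    (hx : x ∈ L.extremePoints ℝ) (hr : 0 < r) : x ∉ convexHull ℝ (L \ ball x r) := fun hmem =>
  ((hL.mem_extremePoints_iff_mem_sdiff_convexHull_sdiff.1 hx).2 <|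
    convexHull_mono (sdiff_subset_sdiff_right (singleton_subset_iff.2 (mem_ball_self hr))) hmem)

theorem exists_pos_extremePoints_inter_ball_nonempty [FiniteDimensional ℝ E] {L : Set E} {x : E}
    {ε : ℝ} (hLc : IsCompact L) (hLconv : Convex ℝ L) (hx : x ∈ L.extremePoints ℝ) (hε : 0 < ε) :
    ∃ η > 0, ∀ K : Set E, IsCompact K → Convex ℝ K → K ⊆ cthickening η L →
      x ∈ cthickening η K → (K.extremePoints ℝ ∩ ball x ε).Nonempty := by
  set D := convexHull ℝ (L \ ball x (ε / 2))
  have hDc : IsCompact D := IsCompact.convexHull (hLc.diff isOpen_ball)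
  obtain ⟨δ, hδ, hδD⟩ := hDc.exists_cthickening_subset_open isOpen_compl_singleton
    (subset_compl_singleton_iff.2 (notMem_convexHull_sdiff_ball hLconv hx (half_pos hε)))
  set η := min (δ / 2) (ε / 4)
  have hη : 0 < η := lt_min (half_pos hδ) (by positivity)
  refine ⟨η, hη, fun K hK hKconv hKL hxK => ?_⟩
  by_contra hfar
  have hext : K.extremePoints ℝ ⊆ cthickening η D := by
    intro e he
    have hnear : e ∈ cthickening η (L \ ball x (ε / 2)) ∪ closedBall x (η + ε / 2) := by
      rw [← cthickening_ball hη.le (half_pos hε), ← cthickening_union, sdiff_union_self]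
      exact cthickening_subset_of_subset η subset_union_left (hKL (extremePoints_subset he))
    rcases hnear with hnearD | hball
    · exact cthickening_subset_of_subset η (subset_convexHull ℝ _) hnearD
    · have : η ≤ ε / 4 := min_le_right _ _
      exact (hfar ⟨e, he, mem_ball.2 ((mem_closedBall.1 hball).trans_lt (by linarith))⟩).elim
  have hKD : K ⊆ cthickening η D := hK.subset_of_extremePoints_subset hKconv isClosed_cthickening
    ((convex_convexHull ℝ _).cthickening η) hext
  have hxD : x ∈ cthickening δ D := by
    have : η + η ≤ δ := by linarith [min_le_left (δ / 2) (ε / 4)]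
    exact cthickening_mono this D <|
      cthickening_cthickening_subset hη.le hη.le D (cthickening_subset_of_subset η hKD hxK)
  exact hδD hxD rfl

end NormedSpace

theorem extremePoint_limit_of_hausdorff_convergence_general {N : ℕ}
    (K : ℕ → Set (EuclideanSpace ℝ (Fin N))) (L : Set (EuclideanSpace ℝ (Fin N)))
    (hKc : ∀ n, IsCompact (K n)) (hKconv : ∀ n, Convex ℝ (K n))
    (hKne : ∀ n, (K n).Nonempty)
    (hLc : IsCompact L) (hLconv : Convex ℝ L)
    (hH : Tendsto (fun n => Metric.hausdorffDist (K n) L) atTop (nhds 0)) :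
    ∀ x ∈ Set.extremePoints ℝ L,
      ∃ v : ℕ → EuclideanSpace ℝ (Fin N),
        (∀ n, v n ∈ Set.extremePoints ℝ (K n)) ∧ Tendsto v atTop (nhds x) := by
  intro x hx
  have hfin : ∀ n, hausdorffEDist (K n) L ≠ ⊤ := fun n =>
    hausdorffEDist_ne_top_of_nonempty_of_bounded (hKne n) ⟨x, hx.1⟩ (hKc n).isBounded
      hLc.isBounded
  refine exists_seq_tendsto_of_eventually_inter_ball_nonempty
    (fun n => (hKc n).extremePoints_nonempty (hKne n)) fun ε hε => ?_
  obtain ⟨η, hη, hnear⟩ := exists_pos_extremePoints_inter_ball_nonempty hLc hLconv hx hε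
  filter_upwards [hH.eventually (eventually_le_nhds hη)] with n hn
  exact hnear (K n) (hKc n) (hKconv n) (subset_cthickening_of_hausdorffDist_le (hfin n) hn) <|
    subset_cthickening_of_hausdorffDist_le (hausdorffEDist_comm.trans_ne (hfin n))
      (hausdorffDist_comm.trans_le hn) hx.1

/-- If a sequence of nonempty compact convex subsets of `ℝ^N` converges in the Hausdorff
metric to a compact convex set `L`, then every extreme point of `L` is the limit of a
sequence of extreme points of the sets in the sequence. -/
theorem extremePoint_limit_of_hausdorff_convergence {N : ℕ}
    (K : ℕ → Set (EuclideanSpace ℝ (Fin N))) (L : Set (EuclideanSpace ℝ (Fin N)))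
    (hKc : ∀ n, IsCompact (K n)) (hKconv : ∀ n, Convex ℝ (K n))
    (hKne : ∀ n, (K n).Nonempty)
    (hLc : IsCompact L) (hLconv : Convex ℝ L) (hLne : L.Nonempty)
    (hH : Tendsto (fun n => Metric.hausdorffDist (K n) L) atTop (nhds 0)) :
    ∀ x ∈ Set.extremePoints ℝ L,
      ∃ v : ℕ → EuclideanSpace ℝ (Fin N),
        (∀ n, v n ∈ Set.extremePoints ℝ (K n)) ∧ Tendsto v atTop (nhds x) :=
  extremePoint_limit_of_hausdorff_convergence_general K L hKc hKconv hKne hLc hLconv hH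
end

section
/- If a sequence (P_n) of convex polygons in the plane, each with exactly k vertices, converges in the Hausdorff topology (on closures) to a convex polygon P which also has exactly k vertices, then for all sufficiently large n the vertices of P_n can be labeled v_n^1,…,v_n^k so that v_n^i converges to the i-th vertex of P for each i; i.e., P_n → P in the vertex topology on the symmetric product. -/
open Filter Set Function Topology Metric

/-!
Every vertex `w i` of the limit polygon is an exposed point of `closure Q`: some linear functional
`f` attains its maximum over `closure Q` only at `w i`, so by compactness the slices
`{q ∈ closure Q | u ≤ f q}` shrink to `w i` as `u ↑ f (w i)`. On a compact set `C` that is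
Hausdorff-close to `closure Q`, `f` attains its maximum at an extreme point `e` of `C`, and `e` is
close to a point of such a slice. Hence every vertex of `Q` is eventually approximated by vertices
of `P n`. Labelling `w i` by a nearest vertex of `P n` gives distinct labels for large `n`, and as
both polygons have `k` vertices these labels exhaust the vertices of `P n`.
-/

section

variable {E : Type*} [NormedAddCommGroup E] [NormedSpace ℝ E]

theorem convex_insert_setOf_lt (f : E →ₗ[ℝ] ℝ) (x : E) :
    Convex ℝ (insert x {y | f y < f x}) := by
  rw [convex_iff_openSegment_subset]
  rintro p hp q hq z ⟨a, b, ha, hb, hab, rfl⟩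
  obtain rfl : a = 1 - b := by linarith
  rcases hp with rfl | hp <;> rcases hq with rfl | hq
  · exact .inl (by rw [← add_smul, sub_add_cancel, one_smul])
  all_goals
    refine .inr ?_
    simp only [mem_ofPred_eq, map_add, map_smul, smul_eq_mul] at *
  · linarith [mul_lt_mul_of_pos_left hq hb]
  · linarith [mul_lt_mul_of_pos_left hp ha]
  · linarith [mul_lt_mul_of_pos_left hp ha, mul_lt_mul_of_pos_left hq hb]

theorem Set.Finite.extremePoints_convexHull_subset_exposedPoints {S : Set E} (hS : S.Finite) :
    (convexHull ℝ S).extremePoints ℝ ⊆ (convexHull ℝ S).exposedPoints ℝ := by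
  intro x hx
  have hx' : x ∉ convexHull ℝ (S \ {x}) := fun h =>
    ((convex_convexHull ℝ S).mem_extremePoints_iff_mem_sdiff_convexHull_sdiff.1 hx).2
      (convexHull_mono (sdiff_subset_sdiff_left (subset_convexHull ℝ S)) h)
  obtain ⟨f, u, hfu, hux⟩ := geometric_hahn_banach_closed_point (convex_convexHull ℝ _)
    (hS.sdiff.isCompact_convexHull ℝ).isClosed hx'
  have hhull : convexHull ℝ S ⊆ insert x {y | f y < f x} := by
    refine convexHull_min (fun y hy => ?_) (convex_insert_setOf_lt f.toLinearMap x)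
    by_cases hyx : y = x
    · exact .inl hyx
    · exact .inr ((hfu y (subset_convexHull ℝ _ ⟨hy, hyx⟩)).trans hux)
  refine ⟨hx.1, f, fun y hy => ?_⟩
  rcases hhull hy with rfl | hlt
  · exact ⟨le_rfl, fun _ => rfl⟩
  · exact ⟨hlt.le, fun h => (hlt.not_ge h).elim⟩

theorem IsCompact.exists_forall_dist_lt_of_mem_exposedPoints {K : Set E} (hK : IsCompact K)
    {x : E} (hx : x ∈ K.exposedPoints ℝ) {ε : ℝ} (hε : 0 < ε) :
    ∃ f : StrongDual ℝ E, ∃ u < f x, ∀ q ∈ K, u ≤ f q → dist q x < ε := by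
  obtain ⟨-, f, hf⟩ := hx
  have hfar : IsCompact (K \ ball x ε) := hK.diff isOpen_ball
  rcases (K \ ball x ε).eq_empty_or_nonempty with hempty | hne
  · refine ⟨f, f x - 1, by linarith, fun q hq _ => ?_⟩
    by_contra h
    exact hempty.subset ⟨hq, fun hb => h (mem_ball.1 hb)⟩
  obtain ⟨z, ⟨hzK, hzx⟩, hzmax⟩ := hfar.exists_isMaxOn hne f.continuous.continuousOn
  have hlt : f z < f x :=
    lt_of_le_of_ne (hf z hzK).1 fun h => hzx (by rw [(hf z hzK).2 h.ge]; exact mem_ball_self hε)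
  refine ⟨f, (f z + f x) / 2, by linarith, fun q hq hu => ?_⟩
  by_contra h
  have := hzmax ⟨hq, fun hb => h (mem_ball.1 hb)⟩
  simp only [mem_ofPred_eq] at this
  linarith

theorem IsCompact.exists_mem_extremePoints_forall_le {C : Set E} (hC : IsCompact C)
    (hne : C.Nonempty) (f : StrongDual ℝ E) :
    ∃ e ∈ C.extremePoints ℝ, ∀ y ∈ C, f y ≤ f e := by
  obtain ⟨z, hzC, hz⟩ := hC.exists_isMaxOn hne f.continuous.continuousOn
  have hexp : IsExposed ℝ C (f.toExposed C) := ContinuousLinearMap.toExposed.isExposed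
  obtain ⟨e, he⟩ := (hexp.isCompact hC).extremePoints_nonempty ⟨z, hzC, hz⟩
  exact ⟨e, hexp.isExtreme.extremePoints_subset_extremePoints he, he.1.2⟩

theorem eventually_exists_mem_extremePoints_dist_lt_of_tendsto_hausdorffDist
    {α : Type*} {l : Filter α} {C : α → Set E} {K : Set E} (hC : ∀ n, IsCompact (C n))
    (hCne : ∀ n, (C n).Nonempty) (hK : IsCompact K)
    (hH : Tendsto (fun n => hausdorffDist (C n) K) l (𝓝 0)) {x : E}
    (hx : x ∈ K.exposedPoints ℝ) {ε : ℝ} (hε : 0 < ε) :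
    ∀ᶠ n in l, ∃ e ∈ (C n).extremePoints ℝ, dist e x < ε := by
  obtain ⟨f, u, hux, hslice⟩ := hK.exists_forall_dist_lt_of_mem_exposedPoints hx (half_pos hε)
  obtain ⟨δ, hδ, hfδ⟩ := Metric.uniformContinuous_iff.1 f.uniformContinuous
    ((f x - u) / 2) (by linarith)
  set d := min δ (ε / 2)
  have hclose : ∀ᶠ n in l, hausdorffDist (C n) K < d :=
    hH.eventually (gt_mem_nhds (lt_min hδ (half_pos hε)))
  filter_upwards [hclose] with n hn
  have hfin : hausdorffEDist (C n) K ≠ ⊤ :=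
    hausdorffEDist_ne_top_of_nonempty_of_bounded (hCne n) ⟨x, hx.1⟩ (hC n).isBounded
      hK.isBounded
  obtain ⟨e, he, hmax⟩ := (hC n).exists_mem_extremePoints_forall_le (hCne n) f
  obtain ⟨y, hyC, hyx⟩ := exists_dist_lt_of_hausdorffDist_lt' hx.1 hn hfin
  obtain ⟨q, hqK, heq⟩ := exists_dist_lt_of_hausdorffDist_lt he.1 hn hfin
  have hfy := hfδ ((dist_comm y x ▸ hyx).trans_le (min_le_left _ _))
  have hfq := hfδ (heq.trans_le (min_le_left _ _))
  rw [Real.dist_eq] at hfy hfq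
  -- `f q` is close to `f e ≥ f y`, and `f y` is close to `f x`
  have hqx : dist q x < ε / 2 :=
    hslice q hqK (by linarith [abs_lt.1 hfy, abs_lt.1 hfq, hmax y hyC])
  refine ⟨e, he, ?_⟩
  calc dist e x ≤ dist e q + dist q x := dist_triangle e q x
    _ < ε / 2 + ε / 2 := add_lt_add (heq.trans_le (min_le_right _ _)) hqx
    _ = ε := add_halves ε

end

theorem eventually_injective_of_tendsto {α ι X : Type*} [TopologicalSpace X] [T2Space X]
    [Finite ι] {l : Filter α} {v : α → ι → X} {w : ι → X} (hw : Injective w)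
    (hv : ∀ i, Tendsto (fun n => v n i) l (𝓝 (w i))) : ∀ᶠ n in l, Injective (v n) := by
  have hne : ∀ᶠ n in l, ∀ i j, i ≠ j → v n i ≠ v n j := by
    simp only [eventually_all]
    intro i j hij
    exact ((hv i).prodMk_nhds (hv j)).eventually
      (isClosed_diagonal.isOpen_compl.mem_nhds (hw.ne hij))
  filter_upwards [hne] with n hn i j hij
  exact not_imp_not.1 (hn i j) hij

theorem exists_labeling_tendsto {α ι X : Type*} [MetricSpace X] [Finite ι] [Nonempty ι]
    {l : Filter α} {S : α → Set X} (hS : ∀ n, (S n).ncard = Nat.card ι) {w : ι → X}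
    (hw : Injective w)
    (happrox : ∀ i, ∀ ε > 0, ∀ᶠ n in l, ∃ e ∈ S n, dist e (w i) < ε) :
    ∃ v : α → ι → X, (∀ᶠ n in l, Injective (v n) ∧ range (v n) = S n) ∧
      ∀ i, Tendsto (fun n => v n i) l (𝓝 (w i)) := by
  have hSfin : ∀ n, (S n).Finite := fun n =>
    finite_of_ncard_pos (by rw [hS n]; exact Nat.card_pos)
  have hSne : ∀ n, (S n).Nonempty := fun n =>
    nonempty_of_ncard_ne_zero (by rw [hS n]; exact Nat.card_pos.ne')
  choose v hvS hvmin using fun n i =>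
    (S n).exists_min_image (fun e => dist e (w i)) (hSfin n) (hSne n)
  have hv : ∀ i, Tendsto (fun n => v n i) l (𝓝 (w i)) := by
    refine fun i => Metric.tendsto_nhds.2 fun ε hε => ?_
    filter_upwards [happrox i ε hε] with n ⟨e, he, hed⟩
    exact (hvmin n i e he).trans_lt hed
  refine ⟨v, ?_, hv⟩
  filter_upwards [eventually_injective_of_tendsto hw hv] with n hinj
  refine ⟨hinj, eq_of_subset_of_ncard_le (range_subset_iff.2 (hvS n)) ?_ (hSfin n)⟩
  rw [hS n, ← image_univ, ncard_image_of_injective _ hinj, ncard_univ]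

theorem polygon_hausdorff_convergence_implies_vertex_convergence_general (k : ℕ)
    (P : ℕ → Set (ℝ × ℝ)) (Q : Set (ℝ × ℝ))
    (hPb : ∀ n, Bornology.IsBounded (P n))
    (hPne : ∀ n, (P n).Nonempty)
    (hQb : Bornology.IsBounded Q) (hQc : Convex ℝ Q) (hQne : Q.Nonempty)
    (hPk : ∀ n, (Set.extremePoints ℝ (closure (P n))).ncard = k)
    (w : Fin k → ℝ × ℝ) (hwinj : Function.Injective w)
    (hwrange : Set.range w = Set.extremePoints ℝ (closure Q))
    (hH : Tendsto (fun n => Metric.hausdorffDist (closure (P n)) (closure Q))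
      atTop (nhds 0)) :
    ∃ v : ℕ → Fin k → ℝ × ℝ,
      (∀ᶠ n in atTop, Function.Injective (v n) ∧
        Set.range (v n) = Set.extremePoints ℝ (closure (P n))) ∧
      ∀ i, Tendsto (fun n => v n i) atTop (nhds (w i)) := by
  have hK : IsCompact (closure Q) := hQb.isCompact_closure
  have : Nonempty (Fin k) := by
    obtain ⟨_, i, -⟩ := hwrange ▸ hK.extremePoints_nonempty hQne.closure
    exact ⟨i⟩
  have hhull : closure Q = convexHull ℝ (range w) := by
    rw [← closure_convexHull_extremePoints hK hQc.closure, ← hwrange,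
      ((finite_range w).isCompact_convexHull ℝ).isClosed.closure_eq]
  have hexposed : ∀ i, w i ∈ (closure Q).exposedPoints ℝ := fun i => by
    rw [hhull]
    refine (finite_range w).extremePoints_convexHull_subset_exposedPoints ?_
    rw [← hhull, ← hwrange]
    exact mem_range_self i
  exact exists_labeling_tendsto (fun n => (hPk n).trans (Nat.card_fin k).symm) hwinj
    fun i ε hε => eventually_exists_mem_extremePoints_dist_lt_of_tendsto_hausdorffDist
      (fun n => (hPb n).isCompact_closure) (fun n => (hPne n).closure) hK hH (hexposed i) hε

/-- If a sequence `P n` of convex polygons in the plane, each with exactly `k` vertices,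
converges in the Hausdorff topology (on closures) to a convex polygon `Q` with exactly `k`
vertices, then eventually the vertices of `P n` can be labeled so that, label by label,
they converge to the corresponding vertices of `Q`; i.e. `P n → Q` in the vertex topology. -/
theorem polygon_hausdorff_convergence_implies_vertex_convergence (k : ℕ)
    (P : ℕ → Set (ℝ × ℝ)) (Q : Set (ℝ × ℝ))
    (hPo : ∀ n, IsOpen (P n)) (hPb : ∀ n, Bornology.IsBounded (P n))
    (hPc : ∀ n, Convex ℝ (P n)) (hPne : ∀ n, (P n).Nonempty)
    (hQo : IsOpen Q) (hQb : Bornology.IsBounded Q) (hQc : Convex ℝ Q) (hQne : Q.Nonempty)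
    (hPk : ∀ n, (Set.extremePoints ℝ (closure (P n))).ncard = k)
    (w : Fin k → ℝ × ℝ) (hwinj : Function.Injective w)
    (hwrange : Set.range w = Set.extremePoints ℝ (closure Q))
    (hH : Tendsto (fun n => Metric.hausdorffDist (closure (P n)) (closure Q))
      atTop (nhds 0)) :
    ∃ v : ℕ → Fin k → ℝ × ℝ,
      (∀ᶠ n in atTop, Function.Injective (v n) ∧
        Set.range (v n) = Set.extremePoints ℝ (closure (P n))) ∧
      ∀ i, Tendsto (fun n => v n i) atTop (nhds (w i)) :=
  polygon_hausdorff_convergence_implies_vertex_convergence_general k P Q hPb hPne hQb hQc hQne hPk w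
    hwinj hwrange hH
end

section
/- Let φ(z) be a nonzero polynomial and k ≥ 1. The function u₊(z) = (1/k) log(a + |φ(z)|²) is a supersolution of the equation Δu = 2e^u − 2|φ|² e^{−(k−1)u} on ℂ for all sufficiently large a > 0; concretely, Δu₊ ≤ 2e^{u₊} − 2|φ|² e^{−(k−1)u₊} holds everywhere provided a is large enough that 2|φ'(z)|² ≤ k (a + |φ(z)|²)^{1/k + 1} for all z ∈ ℂ, and such a exists. -/
/-!
Restricted to a line `t ↦ z + t v`, `N = a + |φ|²` satisfies `(log N)'' = N''/N - (N'/N)²`.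
Summing over `v = 1` and `v = i`, the terms involving `φ''` cancel and
`(Re w)² + (Re (i w))² = |w|²`, which gives `Δ log (a + |φ|²) = 4a |φ'|² / (a + |φ|²)²`.
The right-hand side of the equation at `u₊` equals `2a (a + |φ|²)^(1/k - 1)`, so the
supersolution inequality is exactly `2|φ'|² ≤ k (a + |φ|²)^(1/k + 1)`. As `deg φ' ≤ deg φ`,
`|φ'|² ≤ M (1 + |φ|²)` on `ℂ`, and then that condition holds once `k a^(1/k) ≥ 2M`.
-/

/-- The flat Laplacian `Δ = ∂²/∂x² + ∂²/∂y² = 4 ∂²/∂z∂z̄` of a function on `ℂ`,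
expressed via second directional derivatives in the directions `1` and `i`. -/
noncomputable def lap (f : ℂ → ℝ) (z : ℂ) : ℝ :=
  iteratedFDeriv ℝ 2 f z ![1, 1] + iteratedFDeriv ℝ 2 f z ![Complex.I, Complex.I]

open Complex Polynomial Filter Bornology Asymptotics
open scoped RealInnerProductSpace

theorem iteratedFDeriv_two_apply_eq_iteratedDeriv_line {E F : Type*} [NormedAddCommGroup E]
    [NormedSpace ℝ E] [NormedAddCommGroup F] [NormedSpace ℝ F] {f : E → F} (hf : ContDiff ℝ 2 f)
    (z v : E) :
    iteratedFDeriv ℝ 2 f z ![v, v] = iteratedDeriv 2 (fun t : ℝ => f (z + t • v)) 0 := by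
  have hline : (fun t : ℝ => f (z + t • v)) =
      (fun y => f (z + y)) ∘ ContinuousLinearMap.toSpanSingleton ℝ v := by
    ext t; simp
  have hshift : ContDiff ℝ 2 fun y => f (z + y) := hf.comp (contDiff_const.add contDiff_id)
  rw [iteratedDeriv_eq_iteratedFDeriv, hline,
    ContinuousLinearMap.iteratedFDeriv_comp_right _ hshift _ le_rfl]
  simp only [iteratedFDeriv_comp_add_left, map_zero, add_zero,
    ContinuousMultilinearMap.compContinuousLinearMap_apply,
    ContinuousLinearMap.toSpanSingleton_apply, one_smul]
  congr 1
  ext i; fin_cases i <;> rfl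

theorem iteratedDeriv_two_const_mul_log_add_norm_sq {F : Type*} [NormedAddCommGroup F]
    [InnerProductSpace ℝ F] {h h' : ℝ → F} {h'' : F} {a c t₀ : ℝ} (ha : 0 < a)
    (hh : ∀ t, HasDerivAt h (h' t) t) (hh' : HasDerivAt h' h'' t₀) :
    iteratedDeriv 2 (fun t => c * Real.log (a + ‖h t‖ ^ 2)) t₀ =
      c * (2 * (‖h' t₀‖ ^ 2 + ⟪h t₀, h''⟫) / (a + ‖h t₀‖ ^ 2)
        - (2 * ⟪h t₀, h' t₀⟫) ^ 2 / (a + ‖h t₀‖ ^ 2) ^ 2) := by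
  have hpos t : 0 < a + ‖h t‖ ^ 2 := by positivity
  have hN t : HasDerivAt (fun s => a + ‖h s‖ ^ 2) (2 * ⟪h t, h' t⟫) t :=
    (hh t).norm_sq.const_add a
  have hfirst : deriv (fun t => c * Real.log (a + ‖h t‖ ^ 2)) =
      fun t => c * (2 * ⟪h t, h' t⟫ / (a + ‖h t‖ ^ 2)) :=
    funext fun t => (((hN t).log (hpos t).ne').const_mul c).deriv
  have hsecond :=
    ((((hh t₀).inner ℝ hh').const_mul 2).fun_div (hN t₀) (hpos t₀).ne').const_mul c
  rw [iteratedDeriv_succ, iteratedDeriv_one, hfirst, hsecond.deriv,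
    ← real_inner_self_eq_norm_sq (h' t₀)]
  field_simp
  ring

theorem exists_forall_norm_le_mul_one_add_norm_of_isBigO_cobounded {α E F : Type*}
    [PseudoMetricSpace α] [ProperSpace α] [SeminormedAddCommGroup E] [SeminormedAddCommGroup F]
    {f : α → E} {g : α → F} (hf : Continuous f) (hfg : f =O[cobounded α] g) :
    ∃ C, ∀ x, ‖f x‖ ≤ C * (1 + ‖g x‖) := by
  obtain ⟨c, hc, hfar⟩ := hfg.exists_pos
  have hnear : IsBounded {x | ‖f x‖ ≤ c * ‖g x‖}ᶜ := by
    rw [isBounded_def, compl_compl]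
    exact hfar.bound
  obtain ⟨B, hB⟩ := hnear.isCompact_closure.exists_bound_of_continuousOn hf.continuousOn
  refine ⟨|B| + c, fun x => ?_⟩
  have hg := norm_nonneg (g x)
  by_cases hx : ‖f x‖ ≤ c * ‖g x‖
  · nlinarith [abs_nonneg B]
  · nlinarith [hB x (subset_closure hx), le_abs_self B, abs_nonneg B]

namespace Polynomial

theorem exists_forall_norm_sq_eval_derivative_le {𝕜 : Type*} [NormedField 𝕜] [ProperSpace 𝕜]
    (φ : 𝕜[X]) : ∃ M, ∀ z, ‖φ.derivative.eval z‖ ^ 2 ≤ M * (1 + ‖φ.eval z‖ ^ 2) := by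
  obtain ⟨C, hC⟩ := exists_forall_norm_le_mul_one_add_norm_of_isBigO_cobounded
    φ.derivative.continuous (isBigO_cobounded_of_degree_le (degree_derivative_le (p := φ)))
  refine ⟨2 * C ^ 2, fun z => ?_⟩
  have h := pow_le_pow_left₀ (norm_nonneg _) (hC z) 2
  nlinarith [sq_nonneg (1 - ‖φ.eval z‖), sq_nonneg C]

theorem hasDerivAt_eval_add_smul (φ : ℂ[X]) (z v : ℂ) (t : ℝ) :
    HasDerivAt (fun s : ℝ => φ.eval (z + s • v)) (φ.derivative.eval (z + t • v) * v) t := by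
  have hline := ((hasDerivAt_id t).smul_const v).const_add z
  simp only [id_eq, one_smul] at hline
  exact (φ.hasDerivAt (z + t • v)).comp t hline

theorem contDiff_const_mul_log_add_norm_sq_eval (φ : ℂ[X]) {a : ℝ} (c : ℝ) (ha : 0 < a) :
    ContDiff ℝ 2 fun z => c * Real.log (a + ‖φ.eval z‖ ^ 2) := by
  have hφ : ContDiff ℝ 2 fun z => φ.eval z := φ.differentiable.contDiff.restrict_scalars ℝ
  exact contDiff_const.mul <| (contDiff_const.add ((contDiff_norm_sq ℝ).comp hφ)).log
    fun z => (add_pos_of_pos_of_nonneg ha (sq_nonneg _)).ne'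

theorem iteratedDeriv_two_const_mul_log_add_norm_sq_eval (φ : ℂ[X]) {a : ℝ} (c : ℝ)
    (ha : 0 < a) (z v : ℂ) :
    iteratedDeriv 2 (fun t : ℝ => c * Real.log (a + ‖φ.eval (z + t • v)‖ ^ 2)) 0 =
      c * (2 * (‖φ.derivative.eval z * v‖ ^ 2
            + ⟪φ.eval z, φ.derivative.derivative.eval z * v * v⟫) / (a + ‖φ.eval z‖ ^ 2)
        - (2 * ⟪φ.eval z, φ.derivative.eval z * v⟫) ^ 2 / (a + ‖φ.eval z‖ ^ 2) ^ 2) := by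
  have h'' : HasDerivAt (fun t : ℝ => φ.derivative.eval (z + t • v) * v)
      (φ.derivative.derivative.eval z * v * v) 0 := by
    simpa using (φ.derivative.hasDerivAt_eval_add_smul z v 0).mul_const v
  simpa using iteratedDeriv_two_const_mul_log_add_norm_sq (c := c) ha
    (φ.hasDerivAt_eval_add_smul z v) h''

theorem lap_const_mul_log_add_norm_sq_eval (φ : ℂ[X]) {a : ℝ} (c : ℝ) (ha : 0 < a) (z : ℂ) :
    lap (fun w => c * Real.log (a + ‖φ.eval w‖ ^ 2)) z =
      4 * a * c * ‖φ.derivative.eval z‖ ^ 2 / (a + ‖φ.eval z‖ ^ 2) ^ 2 := by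
  have hf := φ.contDiff_const_mul_log_add_norm_sq_eval c ha
  have hN : a + ‖φ.eval z‖ ^ 2 ≠ 0 := (add_pos_of_pos_of_nonneg ha (sq_nonneg _)).ne'
  rw [lap, iteratedFDeriv_two_apply_eq_iteratedDeriv_line hf, iteratedFDeriv_two_apply_eq_iteratedDeriv_line hf,
    φ.iteratedDeriv_two_const_mul_log_add_norm_sq_eval c ha,
    φ.iteratedDeriv_two_const_mul_log_add_norm_sq_eval c ha]
  field_simp
  simp only [Complex.inner, Complex.sq_norm, Complex.normSq_apply, mul_re, mul_im, conj_re,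
    conj_im, I_sq, neg_re, neg_im, one_re, one_im, I_re, I_im]
  ring

end Polynomial

namespace Real

theorem exists_forall_mul_one_add_le_mul_rpow (M : ℝ) {k : ℝ} (hk : 0 < k) :
    ∃ a₀ : ℝ, 0 < a₀ ∧ ∀ a : ℝ, a₀ ≤ a → ∀ x : ℝ, 0 ≤ x →
      M * (1 + x) ≤ k * (a + x) ^ (1 / k + 1) := by
  obtain ⟨a₀, ha₀⟩ := eventually_atTop.1 <| (eventually_ge_atTop 1).and <|
    (tendsto_rpow_atTop (one_div_pos.2 hk)).eventually_ge_atTop (M / k)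
  refine ⟨max a₀ 1, by positivity, fun a ha x hx => ?_⟩
  obtain ⟨ha1, haM⟩ := ha₀ a (le_of_max_le_left ha)
  have hroot : a ^ (1 / k) ≤ (a + x) ^ (1 / k) := by gcongr; linarith
  calc M * (1 + x) ≤ k * a ^ (1 / k) * (1 + x) := by
        gcongr
        rwa [← div_le_iff₀' hk]
    _ ≤ k * (a + x) ^ (1 / k) * (a + x) := by gcongr
    _ = k * (a + x) ^ (1 / k + 1) := by rw [rpow_add_one (by positivity), mul_assoc]

theorem two_mul_exp_sub_two_mul_mul_exp_eq {a x k : ℝ} (hN : 0 < a + x) (hk : k ≠ 0) :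
    2 * exp (1 / k * log (a + x)) - 2 * x * exp (-(k - 1) * (1 / k * log (a + x))) =
      2 * a * (a + x) ^ (1 / k - 1) := by
  have hexp (y : ℝ) : exp (y * log (a + x)) = (a + x) ^ y := by
    rw [rpow_def_of_pos hN, mul_comm]
  rw [← hexp, show -(k - 1) * (1 / k * log (a + x)) = (1 / k - 1) * log (a + x) by
    field_simp; ring, hexp, hexp, rpow_sub_one hN.ne']
  field_simp
  ring

theorem mul_div_sq_le_mul_rpow_of_le_mul_rpow {a p k N : ℝ} (ha : 0 ≤ a) (hN : 0 < N)
    (hk : 0 < k) (h : 2 * p ≤ k * N ^ (1 / k + 1)) :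
    4 * a * (1 / k) * p / N ^ 2 ≤ 2 * a * N ^ (1 / k - 1) := by
  have hsplit : N ^ (1 / k + 1) = N ^ (1 / k - 1) * N ^ 2 := by
    rw [← rpow_natCast, ← rpow_add hN]
    congr 1
    ring
  rw [div_le_iff₀ (by positivity)]
  calc 4 * a * (1 / k) * p = 2 * a / k * (2 * p) := by ring
    _ ≤ 2 * a / k * (k * N ^ (1 / k + 1)) := by gcongr
    _ = 2 * a * N ^ (1 / k - 1) * N ^ 2 := by rw [hsplit]; field_simp

end Real

theorem supersolution_u_plus_general (k : ℕ) (hk : 1 ≤ k) (φ : Polynomial ℂ) :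
    (∃ a₀ : ℝ, 0 < a₀ ∧ ∀ a : ℝ, a₀ ≤ a → ∀ z : ℂ,
      2 * ‖φ.derivative.eval z‖ ^ 2 ≤
        (k : ℝ) * (a + ‖φ.eval z‖ ^ 2) ^ ((1 : ℝ) / k + 1)) ∧
    (∀ a : ℝ, 0 < a →
      (∀ z : ℂ, 2 * ‖φ.derivative.eval z‖ ^ 2 ≤
        (k : ℝ) * (a + ‖φ.eval z‖ ^ 2) ^ ((1 : ℝ) / k + 1)) →
      ∀ z : ℂ,
        lap (fun w => (1 / (k : ℝ)) * Real.log (a + ‖φ.eval w‖ ^ 2)) z ≤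
          2 * Real.exp ((1 / (k : ℝ)) * Real.log (a + ‖φ.eval z‖ ^ 2)) -
            2 * ‖φ.eval z‖ ^ 2 *
              Real.exp (-((k : ℝ) - 1) *
                ((1 / (k : ℝ)) * Real.log (a + ‖φ.eval z‖ ^ 2)))) := by
  have hk₀ : (0 : ℝ) < k := by exact_mod_cast hk
  constructor
  · obtain ⟨M, hM⟩ := φ.exists_forall_norm_sq_eval_derivative_le
    obtain ⟨a₀, ha₀, hbound⟩ := Real.exists_forall_mul_one_add_le_mul_rpow (2 * M) hk₀
    exact ⟨a₀, ha₀, fun a ha z => by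
      linarith [hM z, hbound a ha (‖φ.eval z‖ ^ 2) (sq_nonneg _)]⟩
  · intro a ha hcond z
    have hN : 0 < a + ‖φ.eval z‖ ^ 2 := by positivity
    rw [φ.lap_const_mul_log_add_norm_sq_eval _ ha,
      Real.two_mul_exp_sub_two_mul_mul_exp_eq hN hk₀.ne']
    exact Real.mul_div_sq_le_mul_rpow_of_le_mul_rpow ha.le hN hk₀ (hcond z)

/-- For a nonzero polynomial `φ` and `k ≥ 1`, the function
`u₊ = (1/k) log(a + |φ|²)` is a supersolution of `Δu = 2e^u − 2|φ|² e^{−(k−1)u}` on `ℂ`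
for all sufficiently large `a > 0`: there exists `a₀ > 0` such that for `a ≥ a₀` the
inequality `2|φ'|² ≤ k (a + |φ|²)^{1/k + 1}` holds everywhere, and whenever that
inequality holds (for some `a > 0`), the supersolution inequality
`Δu₊ ≤ 2e^{u₊} − 2|φ|² e^{−(k−1)u₊}` holds everywhere. -/
theorem supersolution_u_plus (k : ℕ) (hk : 1 ≤ k) (φ : Polynomial ℂ) (hφ : φ ≠ 0) :
    (∃ a₀ : ℝ, 0 < a₀ ∧ ∀ a : ℝ, a₀ ≤ a → ∀ z : ℂ,
      2 * ‖φ.derivative.eval z‖ ^ 2 ≤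
        (k : ℝ) * (a + ‖φ.eval z‖ ^ 2) ^ ((1 : ℝ) / k + 1)) ∧
    (∀ a : ℝ, 0 < a →
      (∀ z : ℂ, 2 * ‖φ.derivative.eval z‖ ^ 2 ≤
        (k : ℝ) * (a + ‖φ.eval z‖ ^ 2) ^ ((1 : ℝ) / k + 1)) →
      ∀ z : ℂ,
        lap (fun w => (1 / (k : ℝ)) * Real.log (a + ‖φ.eval w‖ ^ 2)) z ≤
          2 * Real.exp ((1 / (k : ℝ)) * Real.log (a + ‖φ.eval z‖ ^ 2)) -
            2 * ‖φ.eval z‖ ^ 2 *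
              Real.exp (-((k : ℝ) - 1) *
                ((1 / (k : ℝ)) * Real.log (a + ‖φ.eval z‖ ^ 2)))) :=
  supersolution_u_plus_general k hk φ
end

section
/- Let φ be a nonconstant polynomial of degree d ≥ 1 and k ≥ 2 an integer. There exist constants A', R' > 0 and an exponent α = 2dk/(d+k) > 1 such that: if u is the solution of the coupled vortex equation satisfying the coarse bound u(p) − u_φ(p) ≤ M/|φ(p)|² outside a fixed disk containing the zeros of φ, then for any p whose distance r to the zero set of φ in the singular flat metric |φ|^{2/k}|dz|² exceeds R', one has 0 ≤ u(p) − u_φ(p) ≤ A' r^{−α}. The key computational ingredients are: (i) r ≤ C|p|^{(d+k)/k} for |p| large, and (ii) |φ(p)| ≥ C'|p|^d ≥ C'' r^{dk/(d+k)} for |p| large. -/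
open Polynomial

/-- The length of a path `γ : [0,1] → ℂ` in the singular flat metric `|φ|^{2/k} |dz|²`. -/
noncomputable def flatLength (φ : ℂ[X]) (k : ℕ) (γ : ℝ → ℂ) : ℝ :=
  ∫ t in (0:ℝ)..1, ‖φ.eval (γ t)‖ ^ ((1 : ℝ) / k) * ‖deriv γ t‖

/-- The distance from `p` to the zero set of `φ` in the singular flat metric
`|φ|^{2/k} |dz|²`, as the infimum of flat lengths of `C¹` paths from `p` to a zero. -/
noncomputable def flatDistToZeros (φ : ℂ[X]) (k : ℕ) (p : ℂ) : ℝ :=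
  sInf {L : ℝ | ∃ γ : ℝ → ℂ, ContDiff ℝ 1 γ ∧ γ 0 = p ∧ φ.eval (γ 1) = 0 ∧
    L = flatLength φ k γ}

/-!
Joining `p` to a root of `φ` by a straight segment inside the disc of radius `R ≥ |p|` shows
`r(p) ≲ R^{d/k+1}`, while `|φ(p)| ≳ |p|^d` for large `|p|`. So a large flat distance forces `p`
far out, in particular outside `K`, and there `r^α ≲ |p|^{2d} ≲ |φ(p)|²`, because
`α = 2dk/(d+k)` is exactly the exponent with `(d/k + 1) α = 2d`. This converts the coarse bound
`M/|φ(p)|²` into `A' r^{-α}`.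
-/

open Filter Bornology

lemma one_lt_two_mul_mul_div_add {d k : ℝ} (hd : 1 ≤ d) (hk : 1 < k) :
    1 < 2 * d * k / (d + k) := by
  rw [lt_div_iff₀ (by linarith)]
  nlinarith

lemma add_one_mul_two_mul_mul_div_add {d k : ℝ} (hk : k ≠ 0) (hdk : d + k ≠ 0) :
    (d / k + 1) * (2 * d * k / (d + k)) = 2 * d := by
  field_simp

namespace Polynomial

variable {𝕜 : Type*} [NormedField 𝕜]

lemma norm_eval_le_sum_norm_coeff_mul_pow (q : 𝕜[X]) {R : ℝ} (hR : 1 ≤ R) {w : 𝕜}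
    (hw : ‖w‖ ≤ R) :
    ‖q.eval w‖ ≤ (∑ i ∈ Finset.range (q.natDegree + 1), ‖q.coeff i‖) * R ^ q.natDegree := by
  rw [eval_eq_sum_range, Finset.sum_mul]
  refine (norm_sum_le _ _).trans (Finset.sum_le_sum fun i hi => ?_)
  rw [norm_mul, norm_pow]
  exact mul_le_mul_of_nonneg_left ((pow_le_pow_left₀ (norm_nonneg w) hw i).trans
    (pow_le_pow_right₀ hR (Nat.lt_succ_iff.mp (Finset.mem_range.mp hi)))) (norm_nonneg _)

lemma sum_norm_coeff_pos {q : 𝕜[X]} (hq : q ≠ 0) :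
    0 < ∑ i ∈ Finset.range (q.natDegree + 1), ‖q.coeff i‖ :=
  (norm_pos_iff.mpr (leadingCoeff_ne_zero.mpr hq)).trans_le <|
    Finset.single_le_sum (f := fun i => ‖q.coeff i‖) (fun _ _ => norm_nonneg _)
      (Finset.self_mem_range_succ q.natDegree)

lemma exists_pos_eventually_mul_norm_pow_le_norm_eval {q : 𝕜[X]} (hq : q ≠ 0) :
    ∃ c > 0, ∀ᶠ z in cobounded 𝕜, c * ‖z‖ ^ q.natDegree ≤ ‖q.eval z‖ := by
  obtain ⟨C, hC, hbound⟩ :=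
    (isEquivalent_cobounded_leading_monomial (P := q)).isBigO_symm.exists_pos
  have hlead : 0 < ‖q.leadingCoeff‖ := norm_pos_iff.mpr (leadingCoeff_ne_zero.mpr hq)
  refine ⟨‖q.leadingCoeff‖ / C, by positivity, hbound.bound.mono fun z hz => ?_⟩
  rw [norm_mul, norm_pow] at hz
  rw [div_mul_eq_mul_div, div_le_iff₀ hC]
  linarith

end Polynomial

lemma flatLength_nonneg (φ : ℂ[X]) (k : ℕ) (γ : ℝ → ℂ) : 0 ≤ flatLength φ k γ :=
  intervalIntegral.integral_nonneg zero_le_one fun _ _ => by positivity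

lemma flatDistToZeros_le_flatLength {φ : ℂ[X]} {k : ℕ} {γ : ℝ → ℂ} (hγ : ContDiff ℝ 1 γ)
    (hγ₁ : φ.eval (γ 1) = 0) : flatDistToZeros φ k (γ 0) ≤ flatLength φ k γ :=
  csInf_le ⟨0, fun _ ⟨γ, _, _, _, hL⟩ => hL ▸ flatLength_nonneg φ k γ⟩ ⟨γ, hγ, rfl, hγ₁, rfl⟩

lemma flatDistToZeros_le_of_segment {φ : ℂ[X]} {k : ℕ} {p z₀ : ℂ} (hz₀ : φ.eval z₀ = 0)
    {B : ℝ} (hB : ∀ w ∈ segment ℝ p z₀, ‖φ.eval w‖ ^ ((1 : ℝ) / k) ≤ B) :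
    flatDistToZeros φ k p ≤ B * ‖z₀ - p‖ := by
  set γ : ℝ → ℂ := fun t => p + t • (z₀ - p)
  have hγ : ContDiff ℝ 1 γ := contDiff_const.add (contDiff_id.smul contDiff_const)
  have hderiv (t : ℝ) : deriv γ t = z₀ - p := by
    have h : HasDerivAt γ ((1 : ℝ) • (z₀ - p)) t :=
      ((hasDerivAt_id t).smul_const (z₀ - p)).const_add p
    simpa using h.deriv
  have hint : flatLength φ k γ = ∫ t in (0:ℝ)..1, ‖φ.eval (γ t)‖ ^ ((1 : ℝ) / k) * ‖z₀ - p‖ := by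
    simp only [flatLength, hderiv]
  have hcont : Continuous fun t => ‖φ.eval (γ t)‖ ^ ((1 : ℝ) / k) * ‖z₀ - p‖ :=
    ((φ.continuous.comp hγ.continuous).norm.rpow_const fun _ => Or.inr (by positivity)).mul
      continuous_const
  calc flatDistToZeros φ k p
      ≤ flatLength φ k γ := by simpa [γ] using flatDistToZeros_le_flatLength hγ (by simpa [γ])
    _ ≤ ∫ _ in (0:ℝ)..1, B * ‖z₀ - p‖ := by
      rw [hint]
      refine intervalIntegral.integral_mono_on zero_le_one (hcont.intervalIntegrable 0 1)
        intervalIntegrable_const fun t ht => ?_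
      gcongr
      exact hB _ (segment_eq_image' ℝ p z₀ ▸ Set.mem_image_of_mem _ ht)
    _ = B * ‖z₀ - p‖ := by simp

lemma flatDistToZeros_le_mul_rpow (φ : ℂ[X]) (k : ℕ) {z₀ p : ℂ} (hz₀ : φ.eval z₀ = 0)
    {R : ℝ} (hR : 1 ≤ R) (hp : ‖p‖ ≤ R) (hz : ‖z₀‖ ≤ R) :
    flatDistToZeros φ k p ≤
      2 * (∑ i ∈ Finset.range (φ.natDegree + 1), ‖φ.coeff i‖) ^ ((1 : ℝ) / k) *
        R ^ ((φ.natDegree : ℝ) / k + 1) := by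
  set S := ∑ i ∈ Finset.range (φ.natDegree + 1), ‖φ.coeff i‖
  have hS : 0 ≤ S := Finset.sum_nonneg fun _ _ => norm_nonneg _
  have hR₀ : 0 < R := by linarith
  have hseg : segment ℝ p z₀ ⊆ Metric.closedBall 0 R :=
    (convex_closedBall 0 R).segment_subset (by simpa using hp) (by simpa using hz)
  have hdist : ‖z₀ - p‖ ≤ 2 * R := by linarith [norm_sub_le z₀ p]
  have hpow : (S * R ^ φ.natDegree) ^ ((1 : ℝ) / k) * (2 * R) =
      2 * S ^ ((1 : ℝ) / k) * R ^ ((φ.natDegree : ℝ) / k + 1) := by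
    rw [Real.mul_rpow hS (by positivity), ← Real.rpow_natCast R, ← Real.rpow_mul hR₀.le,
      Real.rpow_add hR₀, Real.rpow_one]
    ring_nf
  refine (flatDistToZeros_le_of_segment hz₀ fun w hw => ?_).trans
    ((mul_le_mul_of_nonneg_left hdist (by positivity)).trans hpow.le)
  have hw' : ‖w‖ ≤ R := by simpa using hseg hw
  gcongr
  exact φ.norm_eval_le_sum_norm_coeff_mul_pow hR hw'

lemma exists_flatDistToZeros_le_mul_rpow {φ : ℂ[X]} (hφ : 0 < φ.degree) (k : ℕ) :
    ∃ C > 0, ∃ R₀, ∀ p : ℂ, ∀ R, R₀ ≤ R → ‖p‖ ≤ R →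
      flatDistToZeros φ k p ≤ C * R ^ ((φ.natDegree : ℝ) / k + 1) := by
  obtain ⟨z₀, hz₀⟩ := Complex.exists_root hφ
  have hS := sum_norm_coeff_pos (ne_zero_of_degree_gt hφ)
  exact ⟨_, mul_pos two_pos (Real.rpow_pos_of_pos hS _), max 1 ‖z₀‖, fun p R hR hp =>
    flatDistToZeros_le_mul_rpow φ k hz₀ (le_of_max_le_left hR) hp (le_of_max_le_right hR)⟩

lemma div_sq_le_mul_rpow_neg {M c C X y r α β : ℝ} {d : ℕ} (hc : 0 < c) (hC : 0 ≤ C)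
    (hX : 0 < X) (hr : 0 < r) (hα : 0 ≤ α) (hβα : β * α = 2 * d)
    (hrX : r ≤ C * X ^ β) (hy : c * X ^ d ≤ y) :
    M / y ^ 2 ≤ (|M| + 1) * C ^ α / c ^ 2 * r ^ (-α) := by
  have hy₀ : 0 < y := (by positivity : 0 < c * X ^ d).trans_le hy
  have hrα : r ^ α ≤ C ^ α * (X ^ d) ^ 2 :=
    calc r ^ α ≤ (C * X ^ β) ^ α := by gcongr
      _ = C ^ α * (X ^ d) ^ 2 := by
        rw [Real.mul_rpow hC (by positivity), ← Real.rpow_mul hX.le, hβα, ← pow_mul,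
          mul_comm d, ← Real.rpow_natCast]
        push_cast
        ring_nf
  have hy2 : c ^ 2 * (X ^ d) ^ 2 ≤ y ^ 2 := by
    rw [← mul_pow]
    gcongr
  rw [Real.rpow_neg hr.le, ← div_eq_mul_inv, div_div,
    div_le_div_iff₀ (by positivity) (by positivity)]
  calc M * (c ^ 2 * r ^ α) ≤ (|M| + 1) * (c ^ 2 * r ^ α) := by
        gcongr
        linarith [le_abs_self M]
    _ ≤ (|M| + 1) * (C ^ α * (c ^ 2 * (X ^ d) ^ 2)) := by
        rw [mul_left_comm (C ^ α)]
        gcongr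
    _ ≤ (|M| + 1) * C ^ α * y ^ 2 := by
        rw [mul_assoc]
        gcongr

theorem coarse_bound_intrinsic_general (φ : ℂ[X]) (k : ℕ) (hk : 2 ≤ k)
    (hd : 1 ≤ φ.natDegree) (u : ℂ → ℝ) (M : ℝ)
    (K : Set ℂ) (hK : IsCompact K)
    (hlower : ∀ p : ℂ, (1 / (k : ℝ)) * Real.log (‖φ.eval p‖ ^ 2) ≤ u p)
    (hupper : ∀ p : ℂ, p ∉ K →
      u p - (1 / (k : ℝ)) * Real.log (‖φ.eval p‖ ^ 2) ≤
        M / ‖φ.eval p‖ ^ 2) :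
    (1 : ℝ) < 2 * φ.natDegree * k / (φ.natDegree + k) ∧
    ∃ A' R' : ℝ, 0 < A' ∧ 0 < R' ∧
      ∀ p : ℂ, R' < flatDistToZeros φ k p →
        0 ≤ u p - (1 / (k : ℝ)) * Real.log (‖φ.eval p‖ ^ 2) ∧
        u p - (1 / (k : ℝ)) * Real.log (‖φ.eval p‖ ^ 2) ≤
          A' * flatDistToZeros φ k p ^
            (-(2 * (φ.natDegree : ℝ) * k / (φ.natDegree + k))) := by
  have hd' : (1 : ℝ) ≤ φ.natDegree := by exact_mod_cast hd
  have hk' : (2 : ℝ) ≤ k := by exact_mod_cast hk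
  set α : ℝ := 2 * φ.natDegree * k / (φ.natDegree + k)
  have hα : 1 < α := one_lt_two_mul_mul_div_add hd' (by linarith : (1 : ℝ) < k)
  have hφ : 0 < φ.degree := natDegree_pos_iff_degree_pos.mp hd
  obtain ⟨C, hC, R₀, hdist⟩ := exists_flatDistToZeros_le_mul_rpow hφ k
  obtain ⟨c, hc, hlow⟩ :=
    exists_pos_eventually_mul_norm_pow_le_norm_eval (ne_zero_of_degree_gt hφ)
  have hK' : ∀ᶠ p in cobounded ℂ, p ∉ K := isBounded_def.mp hK.isBounded
  obtain ⟨R, -, hR⟩ := hasBasis_cobounded_norm.eventually_iff.mp (hlow.and hK')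
  set R₁ := max (max R R₀) 1
  have hR' : 0 < C * R₁ ^ ((φ.natDegree : ℝ) / k + 1) := by positivity
  refine ⟨hα, (|M| + 1) * C ^ α / c ^ 2, _, by positivity, hR', fun p hp => ?_⟩
  have hRR₁ : R ≤ R₁ ∧ R₀ ≤ R₁ ∧ 0 < R₁ := by simp [R₁]
  have hfar : R₁ < ‖p‖ := not_le.mp fun h => hp.not_ge (hdist p R₁ hRR₁.2.1 h)
  obtain ⟨hφp, hpK⟩ := hR (hRR₁.1.trans hfar.le)
  refine ⟨sub_nonneg.mpr (hlower p), (hupper p hpK).trans ?_⟩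
  exact div_sq_le_mul_rpow_neg hc hC.le (hRR₁.2.2.trans hfar) (hR'.trans hp) (by linarith)
    (add_one_mul_two_mul_mul_div_add (by linarith) (by linarith))
    (hdist p ‖p‖ (hRR₁.2.1.trans hfar.le) le_rfl) hφp

/-- Coarse bound, intrinsic version: let `φ` be a nonconstant polynomial of degree
`d ≥ 1`, `k ≥ 2`, and `u_φ = (1/k) log|φ|²`.  If `u ≥ u_φ` everywhere and
`u − u_φ ≤ M/|φ|²` outside a compact set `K` containing the zeros of `φ`, then there are
constants `A', R' > 0` such that, with the exponent `α = 2dk/(d+k) > 1`, every point `p`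
whose flat distance `r` to the zero set of `φ` exceeds `R'` satisfies
`0 ≤ u(p) − u_φ(p) ≤ A' r^{−α}`. -/
theorem coarse_bound_intrinsic (φ : ℂ[X]) (k : ℕ) (hk : 2 ≤ k)
    (hd : 1 ≤ φ.natDegree) (u : ℂ → ℝ) (M : ℝ)
    (K : Set ℂ) (hK : IsCompact K) (hzeros : ∀ z : ℂ, φ.eval z = 0 → z ∈ K)
    (hlower : ∀ p : ℂ, (1 / (k : ℝ)) * Real.log (‖φ.eval p‖ ^ 2) ≤ u p)
    (hupper : ∀ p : ℂ, p ∉ K →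
      u p - (1 / (k : ℝ)) * Real.log (‖φ.eval p‖ ^ 2) ≤
        M / ‖φ.eval p‖ ^ 2) :
    (1 : ℝ) < 2 * φ.natDegree * k / (φ.natDegree + k) ∧
    ∃ A' R' : ℝ, 0 < A' ∧ 0 < R' ∧
      ∀ p : ℂ, R' < flatDistToZeros φ k p →
        0 ≤ u p - (1 / (k : ℝ)) * Real.log (‖φ.eval p‖ ^ 2) ∧
        u p - (1 / (k : ℝ)) * Real.log (‖φ.eval p‖ ^ 2) ≤
          A' * flatDistToZeros φ k p ^
            (-(2 * (φ.natDegree : ℝ) * k / (φ.natDegree + k))) :=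
  coarse_bound_intrinsic_general φ k hk hd u M K hK hlower hupper
end

section
/- Let u, v be C² functions on an open set with u satisfying Δu = 2e^u − 2e^{−(k−1)u} and v satisfying v ≥ 0 and Δv ≤ 2k·v − k(k−2)v² ≤ 2e^v − 2e^{−(k−1)v}. If η = u − v attains an interior maximum at a point p with η(p) > 0, then at p one has (e^{η} − 1) ≤ e^{−(k−2)v}(e^{−(k−1)η} − 1), which is impossible since η(p) > 0; hence η ≤ 0 wherever an interior positive maximum would exist. (Formally: the inequality Δη ≥ 2e^v(e^η − 1) − 2e^{−(k−1)v}(e^{−(k−1)η} − 1) holds pointwise, and at an interior maximum Δη ≤ 0 forces η ≤ 0.) -/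
open Filter Topology Real

theorem IsLocalMax.deriv_deriv_nonpos {f : ℝ → ℝ} {x : ℝ} (h : IsLocalMax f x)
    (hc : ContinuousAt f x) : deriv (deriv f) x ≤ 0 := by
  by_contra! hpos
  -- by the second derivative test `x` is also a local minimum, so `f` is constant near `x`
  have hmin := isLocalMin_of_deriv_deriv_pos hpos h.deriv_eq_zero hc
  have hconst : f =ᶠ[𝓝 x] fun _ => f x := by
    filter_upwards [h, hmin] with y hmax hmin using le_antisymm hmax hmin
  have hderiv : deriv f =ᶠ[𝓝 x] fun _ => 0 := by
    filter_upwards [hconst.deriv] with y hy using hy.trans (deriv_const y _)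
  simp [hderiv.deriv_eq] at hpos

theorem IsLocalMax.iteratedFDeriv_two_apply_self_nonpos {E : Type*} [NormedAddCommGroup E]
    [NormedSpace ℝ E] {f : E → ℝ} {p : E} (h : IsLocalMax f p) (hf : ContDiffAt ℝ 2 f p)
    (w : E) : iteratedFDeriv ℝ 2 f p ![w, w] ≤ 0 := by
  have hline : ∀ t : ℝ, HasDerivAt (fun t : ℝ => p + t • w) w t := fun t => by
    simpa using ((hasDerivAt_id t).smul_const w).const_add p
  have htend : Tendsto (fun t : ℝ => p + t • w) (𝓝 0) (𝓝 p) := by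
    simpa using (hline 0).continuousAt.tendsto
  have hdiff : ∀ᶠ t in 𝓝 (0 : ℝ), DifferentiableAt ℝ f (p + t • w) :=
    htend.eventually ((hf.eventually (by simp)).mono fun z hz => hz.differentiableAt (by simp))
  set g : ℝ → ℝ := fun t => f (p + t • w)
  have hg' : deriv g =ᶠ[𝓝 0] fun t => fderiv ℝ f (p + t • w) w := by
    filter_upwards [hdiff] with t ht
    exact (ht.hasFDerivAt.comp_hasDerivAt t (hline t)).deriv
  have hf'' : HasFDerivAt (fderiv ℝ f) (fderiv ℝ (fderiv ℝ f) p) (p + (0 : ℝ) • w) := by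
    simpa using ((hf.fderiv_right (m := 1) le_rfl).differentiableAt (by simp)).hasFDerivAt
  have hg'' : HasDerivAt (deriv g) (fderiv ℝ (fderiv ℝ f) p w w) 0 := by
    have hA : HasDerivAt (fun t : ℝ => fderiv ℝ f (p + t • w)) (fderiv ℝ (fderiv ℝ f) p w) 0 :=
      hf''.comp_hasDerivAt 0 (hline 0)
    refine HasDerivAt.congr_of_eventuallyEq ?_ hg'
    simpa using hA.clm_apply (hasDerivAt_const (0 : ℝ) w)
  have hgmax : IsLocalMax g 0 := by simpa [IsLocalMax, IsMaxFilter, g] using htend.eventually h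
  have hgc : ContinuousAt g 0 := hf.continuousAt.comp_of_eq (hline 0).continuousAt (by simp)
  rw [iteratedFDeriv_two_apply]
  simpa [hg''.deriv] using hgmax.deriv_deriv_nonpos hgc

theorem lap_nonpos_of_isLocalMax {f : ℂ → ℝ} {p : ℂ} (h : IsLocalMax f p)
    (hf : ContDiffAt ℝ 2 f p) : lap f p ≤ 0 :=
  add_nonpos (h.iteratedFDeriv_two_apply_self_nonpos hf 1)
    (h.iteratedFDeriv_two_apply_self_nonpos hf Complex.I)

theorem lap_sub {f g : ℂ → ℝ} {z : ℂ} (hf : ContDiffAt ℝ 2 f z) (hg : ContDiffAt ℝ 2 g z) :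
    lap (fun w => f w - g w) z = lap f z - lap g z := by
  simp only [lap, fun_iteratedFDeriv_sub_apply hf hg, sub_apply]
  ring

theorem two_exp_sub_two_exp_neg_mul_sub (c x y : ℝ) :
    2 * exp x - 2 * exp (-c * x) - (2 * exp y - 2 * exp (-c * y)) =
      2 * exp y * (exp (x - y) - 1) - 2 * exp (-c * y) * (exp (-c * (x - y)) - 1) := by
  have e1 : exp y * exp (x - y) = exp x := by rw [← exp_add, add_sub_cancel]
  have e2 : exp (-c * y) * exp (-c * (x - y)) = exp (-c * x) := by rw [← exp_add]; ring_nf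
  linear_combination 2 * e2 - 2 * e1

theorem two_exp_mul_exp_sub_one_sub_pos {c x : ℝ} (hc : 0 ≤ c) (hx : 0 < x) (y : ℝ) :
    0 < 2 * exp y * (exp x - 1) - 2 * exp (-c * y) * (exp (-c * x) - 1) := by
  have h1 : 0 < 2 * exp y * (exp x - 1) := mul_pos (by positivity) (by simpa using hx)
  have h2 : exp (-c * x) ≤ 1 := exp_le_one_iff.mpr (by nlinarith)
  nlinarith [exp_pos (-c * y)]

theorem max_principle_comparison_general (k : ℕ) (hk : 3 ≤ k)
    (s : Set ℂ) (hs : IsOpen s) (u v : ℂ → ℝ)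
    (hu : ContDiffOn ℝ 2 u s) (hv : ContDiffOn ℝ 2 v s)
    (hueq : ∀ z ∈ s,
      lap u z = 2 * Real.exp (u z) - 2 * Real.exp (-((k : ℝ) - 1) * u z))
    (hvsub : ∀ z ∈ s,
      lap v z ≤ 2 * (k : ℝ) * v z - (k : ℝ) * ((k : ℝ) - 2) * v z ^ 2)
    (hvcomp : ∀ z ∈ s,
      2 * (k : ℝ) * v z - (k : ℝ) * ((k : ℝ) - 2) * v z ^ 2 ≤
        2 * Real.exp (v z) - 2 * Real.exp (-((k : ℝ) - 1) * v z)) :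
    (∀ z ∈ s,
      2 * Real.exp (v z) * (Real.exp (u z - v z) - 1) -
          2 * Real.exp (-((k : ℝ) - 1) * v z) *
            (Real.exp (-((k : ℝ) - 1) * (u z - v z)) - 1) ≤
        lap (fun w => u w - v w) z) ∧
    (∀ p ∈ s, IsMaxOn (fun z => u z - v z) s p → u p - v p ≤ 0) := by
  have hη : ∀ z ∈ s, ContDiffAt ℝ 2 (fun w => u w - v w) z := fun z hz =>
    (hu.sub hv).contDiffAt (hs.mem_nhds hz)
  have hlap : ∀ z ∈ s,
      2 * exp (v z) * (exp (u z - v z) - 1) -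
          2 * exp (-((k : ℝ) - 1) * v z) * (exp (-((k : ℝ) - 1) * (u z - v z)) - 1) ≤
        lap (fun w => u w - v w) z := fun z hz => by
    rw [lap_sub (hu.contDiffAt (hs.mem_nhds hz)) (hv.contDiffAt (hs.mem_nhds hz)), hueq z hz,
      ← two_exp_sub_two_exp_neg_mul_sub]
    linarith [hvsub z hz, hvcomp z hz]
  refine ⟨hlap, fun p hp hmax => ?_⟩
  by_contra! hpos
  have hk1 : (0 : ℝ) ≤ k - 1 := by
    have : (3 : ℝ) ≤ k := by exact_mod_cast hk
    linarith
  have hnonpos := lap_nonpos_of_isLocalMax (hmax.isLocalMax (hs.mem_nhds hp)) (hη p hp)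
  linarith [hlap p hp, two_exp_mul_exp_sub_one_sub_pos hk1 hpos (v p)]

/-- Maximum-principle comparison: if on an open set `s`, `u` satisfies
`Δu = 2e^u − 2e^{−(k−1)u}` and `v ≥ 0` satisfies
`Δv ≤ 2kv − k(k−2)v² ≤ 2e^v − 2e^{−(k−1)v}`, then for `η = u − v` the pointwise
inequality `Δη ≥ 2e^v(e^η − 1) − 2e^{−(k−1)v}(e^{−(k−1)η} − 1)` holds on `s`, and at any
interior maximum of `η` on `s` one has `η ≤ 0` (an interior positive maximum is
impossible). -/
theorem max_principle_comparison (k : ℕ) (hk : 3 ≤ k)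
    (s : Set ℂ) (hs : IsOpen s) (u v : ℂ → ℝ)
    (hu : ContDiffOn ℝ 2 u s) (hv : ContDiffOn ℝ 2 v s)
    (hueq : ∀ z ∈ s,
      lap u z = 2 * Real.exp (u z) - 2 * Real.exp (-((k : ℝ) - 1) * u z))
    (hv0 : ∀ z ∈ s, 0 ≤ v z)
    (hvsub : ∀ z ∈ s,
      lap v z ≤ 2 * (k : ℝ) * v z - (k : ℝ) * ((k : ℝ) - 2) * v z ^ 2)
    (hvcomp : ∀ z ∈ s,
      2 * (k : ℝ) * v z - (k : ℝ) * ((k : ℝ) - 2) * v z ^ 2 ≤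
        2 * Real.exp (v z) - 2 * Real.exp (-((k : ℝ) - 1) * v z)) :
    (∀ z ∈ s,
      2 * Real.exp (v z) * (Real.exp (u z - v z) - 1) -
          2 * Real.exp (-((k : ℝ) - 1) * v z) *
            (Real.exp (-((k : ℝ) - 1) * (u z - v z)) - 1) ≤
        lap (fun w => u w - v w) z) ∧
    (∀ p ∈ s, IsMaxOn (fun z => u z - v z) s p → u p - v p ≤ 0) :=
  max_principle_comparison_general k hk s hs u v hu hv hueq hvsub hvcomp
end

section
/- If A : [a,∞) → Mₙ(ℝ) is continuous and ∫ₐ^∞ ‖A(t)‖ dt < ∞, then every solution F of F'(t) = F(t)A(t) on [a,∞) converges: there exists F₀ ∈ GLₙ(ℝ) with F(t) → F₀ as t → ∞; moreover if F(a) is invertible then F₀ is invertible. -/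
/-!
Gronwall's inequality bounds `‖F t‖` by `‖F a‖ exp ∫ₐ^∞ ‖A‖`, so the derivative `F A` is
integrable on `[a, ∞)` and `F` converges to some `F₀`. Run backwards in time, the same inequality
shows that a solution tending to `0` must vanish at `a`. If `P F₀ = 0`, then `P F` is such a
solution, so `P F(a) = 0`, and `P = 0` when `F(a)` is invertible. Thus `F₀` is not a right zero
divisor, which in the Artinian ring `Mₙ(ℝ)` makes it a unit.
-/

open MeasureTheory Set Filter Real
open scoped Topology

section Gronwall

variable {E : Type*} [NormedAddCommGroup E] [NormedSpace ℝ E] {f f' : ℝ → E} {k : ℝ → ℝ}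
  {s t : ℝ}

theorem norm_le_mul_exp_integral_of_norm_deriv_le (hst : s ≤ t) (hk : ContinuousOn k (Icc s t))
    (hf : ∀ u ∈ Icc s t, HasDerivAt f (f' u) u) (bound : ∀ u ∈ Icc s t, ‖f' u‖ ≤ k u * ‖f u‖) :
    ‖f t‖ ≤ ‖f s‖ * exp (∫ u in s..t, k u) := by
  wlog hk_cont : Continuous k generalizing k with H
  · have hext : ∀ u ∈ Icc s t, k (projIcc s t hst u) = k u := fun u hu => by
      simp [projIcc_of_mem hst hu]
    rw [← intervalIntegral.integral_congr (by rwa [uIcc_of_le hst])]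
    exact H (hk.congr hext) (fun u hu => by simpa only [hext u hu] using bound u hu)
      (hk.comp_continuous (continuous_subtype_val.comp continuous_projIcc) fun u =>
        Subtype.mem _)
  -- The fence `(‖f s‖ + ε) exp (∫ₛᵘ k + ε (u - s))` grows strictly faster than `‖f‖` can.
  have fence : ∀ ε > 0, ‖f t‖ ≤ (‖f s‖ + ε) * exp ((∫ u in s..t, k u) + ε * (t - s)) := by
    intro ε hε
    set B := fun v => (‖f s‖ + ε) * exp ((∫ w in s..v, k w) + ε * (v - s))
    have hB : ∀ u, HasDerivAt B ((k u + ε) * B u) u := fun u => by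
      have := (((hk_cont.integral_hasStrictDerivAt s u).hasDerivAt.add
        (((hasDerivAt_id u).sub_const s).const_mul ε)).exp).const_mul (‖f s‖ + ε)
      exact this.congr_deriv (by simp only [B, Pi.add_apply, id]; ring)
    refine image_norm_le_of_norm_deriv_right_lt_deriv_boundary
      (fun u hu => (hf u hu).continuousAt.continuousWithinAt)
      (fun u hu => (hf u (Ico_subset_Icc_self hu)).hasDerivWithinAt) (by simp [B, hε.le]) hB
      (fun u hu hfu => ?_) (right_mem_Icc.2 hst)
    rw [← hfu]
    calc ‖f' u‖ ≤ k u * ‖f u‖ := bound u (Ico_subset_Icc_self hu)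
      _ < (k u + ε) * ‖f u‖ := by
        have : 0 < ‖f u‖ := hfu ▸ by positivity
        nlinarith
  have hlim : Tendsto (fun ε => (‖f s‖ + ε) * exp ((∫ u in s..t, k u) + ε * (t - s)))
      (𝓝[>] 0) (𝓝 (‖f s‖ * exp (∫ u in s..t, k u))) := by
    have hc : Continuous fun ε => (‖f s‖ + ε) * exp ((∫ u in s..t, k u) + ε * (t - s)) := by
      fun_prop
    simpa using (hc.tendsto 0).mono_left nhdsWithin_le_nhds
  exact ge_of_tendsto hlim (eventually_nhdsWithin_of_forall fence)

theorem norm_le_mul_exp_integral_of_norm_deriv_le_backward (hst : s ≤ t)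
    (hk : ContinuousOn k (Icc s t)) (hf : ∀ u ∈ Icc s t, HasDerivAt f (f' u) u)
    (bound : ∀ u ∈ Icc s t, ‖f' u‖ ≤ k u * ‖f u‖) :
    ‖f s‖ ≤ ‖f t‖ * exp (∫ u in s..t, k u) := by
  have hrefl : ∀ u ∈ Icc s t, s + t - u ∈ Icc s t := fun u hu =>
    ⟨by linarith [hu.2], by linarith [hu.1]⟩
  have key := norm_le_mul_exp_integral_of_norm_deriv_le (f := fun u => f (s + t - u))
    (f' := fun u => -f' (s + t - u)) (k := fun u => k (s + t - u)) hst
    (hk.comp (by fun_prop) hrefl)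
    (fun u hu => by simpa using (hf _ (hrefl u hu)).comp_const_sub (s + t) u)
    (fun u hu => by simpa only [norm_neg] using bound _ (hrefl u hu))
  simpa [intervalIntegral.integral_comp_sub_left] using key

end Gronwall

theorem intervalIntegral_le_setIntegral_Ici {g : ℝ → ℝ} {a t : ℝ} (hg : IntegrableOn g (Ici a))
    (hg0 : ∀ u ∈ Ici a, 0 ≤ g u) (ht : a ≤ t) :
    ∫ u in a..t, g u ≤ ∫ u in Ici a, g u := by
  rw [intervalIntegral.integral_of_le ht]
  exact setIntegral_mono_set hg ((ae_restrict_iff' measurableSet_Ici).2 (.of_forall hg0))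
    (Ioc_subset_Icc_self.trans Icc_subset_Ici_self).eventuallyLE

section LinearODE

variable {R : Type*} [NormedRing R] {A F : ℝ → R} {a : ℝ}

section

variable [NormedSpace ℝ R]

theorem norm_le_mul_exp_integral_Ici_of_hasDerivAt_mul (hA : ContinuousOn A (Ici a))
    (hint : IntegrableOn (fun t => ‖A t‖) (Ici a))
    (hF : ∀ t ∈ Ici a, HasDerivAt F (F t * A t) t) {t : ℝ} (ht : a ≤ t) :
    ‖F t‖ ≤ ‖F a‖ * exp (∫ u in Ici a, ‖A u‖) := by
  calc ‖F t‖ ≤ ‖F a‖ * exp (∫ u in a..t, ‖A u‖) :=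
        norm_le_mul_exp_integral_of_norm_deriv_le ht (hA.norm.mono Icc_subset_Ici_self)
          (fun u hu => hF u hu.1) (fun u _ => (norm_mul_le _ _).trans_eq (mul_comm _ _))
    _ ≤ ‖F a‖ * exp (∫ u in Ici a, ‖A u‖) := by
        gcongr
        exact intervalIntegral_le_setIntegral_Ici hint (fun _ _ => norm_nonneg _) ht

theorem tendsto_limUnder_of_hasDerivAt_mul [CompleteSpace R] (hA : ContinuousOn A (Ici a))
    (hint : IntegrableOn (fun t => ‖A t‖) (Ici a))
    (hF : ∀ t ∈ Ici a, HasDerivAt F (F t * A t) t) :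
    Tendsto F atTop (𝓝 (limUnder atTop F)) := by
  set C := ‖F a‖ * exp (∫ u in Ici a, ‖A u‖)
  have hFA_cont : ContinuousOn (fun t => F t * A t) (Ioi a) :=
    (ContinuousOn.mul (fun t ht => (hF t ht).continuousAt.continuousWithinAt) hA).mono
      Ioi_subset_Ici_self
  have hFA : IntegrableOn (fun t => F t * A t) (Ioi a) := by
    refine ((hint.mono_set Ioi_subset_Ici_self).const_mul C).mono'
      (hFA_cont.aestronglyMeasurable measurableSet_Ioi) ?_
    refine (ae_restrict_iff' measurableSet_Ioi).2 (.of_forall fun t ht => ?_)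
    calc ‖F t * A t‖ ≤ ‖F t‖ * ‖A t‖ := norm_mul_le _ _
      _ ≤ C * ‖A t‖ := by
        gcongr
        exact norm_le_mul_exp_integral_Ici_of_hasDerivAt_mul hA hint hF ht.le
  exact tendsto_limUnder_of_hasDerivAt_of_integrableOn_Ioi
    (fun t ht => hF t (Ioi_subset_Ici_self ht)) hFA

theorem eq_zero_of_hasDerivAt_mul_of_tendsto_zero (hA : ContinuousOn A (Ici a))
    (hint : IntegrableOn (fun t => ‖A t‖) (Ici a))
    (hF : ∀ t ∈ Ici a, HasDerivAt F (F t * A t) t) (hlim : Tendsto F atTop (𝓝 0)) :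
    F a = 0 := by
  have hbound : ∀ t ≥ a, ‖F a‖ ≤ ‖F t‖ * exp (∫ u in Ici a, ‖A u‖) := fun t ht =>
    calc ‖F a‖ ≤ ‖F t‖ * exp (∫ u in a..t, ‖A u‖) :=
          norm_le_mul_exp_integral_of_norm_deriv_le_backward ht
            (hA.norm.mono Icc_subset_Ici_self) (fun u hu => hF u hu.1)
            (fun u _ => (norm_mul_le _ _).trans_eq (mul_comm _ _))
      _ ≤ ‖F t‖ * exp (∫ u in Ici a, ‖A u‖) := by
          gcongr
          exact intervalIntegral_le_setIntegral_Ici hint (fun _ _ => norm_nonneg _) ht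
  have hlim' : Tendsto (fun t => ‖F t‖ * exp (∫ u in Ici a, ‖A u‖)) atTop (𝓝 0) := by
    simpa using hlim.norm.mul_const (exp (∫ u in Ici a, ‖A u‖))
  exact norm_le_zero_iff.1 (ge_of_tendsto hlim' ((eventually_ge_atTop a).mono hbound))

end

theorem isUnit_of_hasDerivAt_mul_of_tendsto [NormedAlgebra ℝ R] [IsArtinianRing R]
    (hA : ContinuousOn A (Ici a))
    (hint : IntegrableOn (fun t => ‖A t‖) (Ici a))
    (hF : ∀ t ∈ Ici a, HasDerivAt F (F t * A t) t) {F₀ : R} (hlim : Tendsto F atTop (𝓝 F₀))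
    (ha : IsUnit (F a)) : IsUnit F₀ := by
  rw [IsArtinianRing.isUnit_iff_isRightRegular, isRightRegular_iff_mem_nonZeroDivisorsRight,
    mem_nonZeroDivisorsRight_iff]
  intro P hP
  refine ha.mul_left_eq_zero.1 (eq_zero_of_hasDerivAt_mul_of_tendsto_zero hA hint
    (fun t ht => ((hF t ht).const_mul P).congr_deriv (mul_assoc _ _ _).symm) ?_)
  simpa [hP] using hlim.const_mul P

end LinearODE

attribute [local instance] Matrix.linftyOpNormedRing Matrix.linftyOpNormedAlgebra

/-- Integrable-coefficient ODE convergence: if `∫ₐ^∞ ‖A(t)‖ dt < ∞` then every solution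
of `F' = F·A` on `[a,∞)` converges to some matrix `F₀` as `t → ∞`, and `F₀` is
invertible whenever `F(a)` is. -/
theorem ode_integrable_coefficient_limit (n : ℕ) (a : ℝ)
    (A F : ℝ → Matrix (Fin n) (Fin n) ℝ)
    (hA : ContinuousOn A (Set.Ici a))
    (hint : MeasureTheory.IntegrableOn (fun t => ‖A t‖) (Set.Ici a))
    (hF : ∀ t ∈ Set.Ici a, HasDerivAt F (F t * A t) t) :
    ∃ F₀ : Matrix (Fin n) (Fin n) ℝ,
      Filter.Tendsto F Filter.atTop (nhds F₀) ∧ (IsUnit (F a) → IsUnit F₀) := by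
  have hlim := tendsto_limUnder_of_hasDerivAt_mul hA hint hF
  exact ⟨_, hlim, isUnit_of_hasDerivAt_mul_of_tendsto hA hint hF hlim⟩
end

section
/- Let X ∈ Mₙ(ℝ). There exist M, C, δ₁ > 0 (depending on X, M) such that: if s : [a,b] → ℝ and B : [a,b] → Mₙ(ℝ) are continuous with ∫ₐᵇ |s(t)| dt < M and ‖B(t)‖ < δ < δ₁ for all t, then the solution F of F'(t) = F(t)(s(t)X + B(t)) with F(a) = I satisfies ‖F(t) − exp((∫ₐᵗ s(τ)dτ)·X)‖ ≤ Cδ for all t ∈ [a,b]. -/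
attribute [local instance] Matrix.linftyOpNormedRing Matrix.linftyOpNormedAlgebra

/-!
Write `G t = exp ((∫ₐᵗ s) • X)` and `K = exp (M ‖X‖)`, so that `‖G t‖, ‖G t⁻¹‖ ≤ K`.
Since `X` commutes with `G t`, the `s • X` terms cancel in the derivative of
`H = F G⁻¹ - 1`, leaving `H' = F B G⁻¹`; with `F = (H + 1) G` this gives
`‖H'‖ ≤ K² δ (‖H‖ + 1)` and `H a = 0`, so Grönwall bounds `‖H t‖` by
`exp (K² δ (t - a)) - 1 = O(δ)`. Finally `F - G = H G`.
-/

open Set Topology NormedSpace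

lemma Real.exp_sub_one_le_mul_exp (y : ℝ) : Real.exp y - 1 ≤ y * Real.exp y := by
  have h := mul_le_mul_of_nonneg_right (Real.add_one_le_exp (-y)) (Real.exp_pos y).le
  rw [← Real.exp_add, neg_add_cancel, Real.exp_zero] at h
  linarith

lemma Real.exp_sub_one_le_of_le_mul {y L δ : ℝ} (hL : 0 ≤ L) (hδ : 0 ≤ δ) (hδ1 : δ ≤ 1)
    (hy : y ≤ L * δ) : Real.exp y - 1 ≤ L * Real.exp L * δ := by
  have hyL : y ≤ L := hy.trans (mul_le_of_le_one_right hL hδ1)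
  calc Real.exp y - 1 ≤ y * Real.exp y := exp_sub_one_le_mul_exp y
    _ ≤ L * δ * Real.exp L := by gcongr
    _ = L * Real.exp L * δ := by ring

lemma Matrix.linfty_opNorm_one_le (n : Type*) [Fintype n] [DecidableEq n] :
    ‖(1 : Matrix n n ℝ)‖ ≤ 1 := by
  rw [← Matrix.diagonal_one, Matrix.linfty_opNorm_diagonal]
  exact (pi_norm_const_le (1 : ℝ)).trans norm_one.le

lemma intervalIntegral.abs_integral_le_integral_abs_of_mem_Icc {s : ℝ → ℝ} {a b t : ℝ}
    (hs : IntervalIntegrable s MeasureTheory.volume a b) (ht : t ∈ Icc a b) :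
    |∫ τ in a..t, s τ| ≤ ∫ τ in a..b, |s τ| :=
  (abs_integral_le_integral_abs ht.1).trans <|
    integral_mono_interval le_rfl ht.1 ht.2 (.of_forall fun _ => abs_nonneg _) hs.abs

lemma ContinuousOn.hasDerivWithinAt_integral_Ici {E : Type*} [NormedAddCommGroup E]
    [NormedSpace ℝ E] [CompleteSpace E] {f : ℝ → E} {a b x : ℝ}
    (hf : ContinuousOn f (Icc a b)) (hx : x ∈ Ico a b) :
    HasDerivWithinAt (fun t => ∫ τ in a..t, f τ) (f x) (Ici x) x := by
  have hmem : Icc a b ∈ 𝓝[>] x :=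
    nhdsWithin_mono x Ioi_subset_Ici_self (Icc_mem_nhdsGE_of_mem hx)
  exact intervalIntegral.integral_hasDerivWithinAt_right
    ((hf.mono (Icc_subset_Icc_right hx.2.le)).intervalIntegrable_of_Icc hx.1)
    ((hf.stronglyMeasurableAtFilter_nhdsWithin measurableSet_Icc x).filter_mono
      (nhdsWithin_le_of_mem hmem))
    ((hf x (Ico_subset_Icc_self hx)).mono_of_mem_nhdsWithin hmem)

lemma norm_le_exp_sub_one_of_norm_deriv_right_le {E : Type*} [NormedAddCommGroup E]
    [NormedSpace ℝ E] {f f' : ℝ → E} {κ a b : ℝ} (hf : ContinuousOn f (Icc a b))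
    (hf' : ∀ x ∈ Ico a b, HasDerivWithinAt f (f' x) (Ici x) x) (ha : f a = 0)
    (bound : ∀ x ∈ Ico a b, ‖f' x‖ ≤ κ * (‖f x‖ + 1)) :
    ∀ x ∈ Icc a b, ‖f x‖ ≤ Real.exp (κ * (x - a)) - 1 := by
  intro x hx
  have := norm_le_gronwallBound_of_norm_deriv_right_le hf hf' (by rw [ha, norm_zero])
    (fun y hy => (bound y hy).trans_eq (mul_add_one κ _)) x hx
  rcases eq_or_ne κ 0 with rfl | hκ
  · simpa [gronwallBound_K0] using this
  · simpa [gronwallBound_of_K_ne_0 hκ, div_self hκ] using this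

section BanachAlgebra

variable {𝔸 : Type*} [NormedRing 𝔸] [NormedAlgebra ℝ 𝔸]

-- `‖1‖ ≤ 1` rather than `NormOneClass`, which fails for `0 × 0` matrices.
lemma NormedSpace.norm_exp_le_exp_norm (h1 : ‖(1 : 𝔸)‖ ≤ 1) (x : 𝔸) :
    ‖exp x‖ ≤ Real.exp ‖x‖ := by
  have hsum : HasSum (fun n : ℕ => (n.factorial : ℝ)⁻¹ • ‖x‖ ^ n) (Real.exp ‖x‖) := by
    rw [Real.exp_eq_exp_ℝ, congrFun (exp_eq_tsum ℝ) ‖x‖]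
    exact (expSeries_summable' (𝕂 := ℝ) ‖x‖).hasSum
  rw [congrFun (exp_eq_tsum ℝ) x]
  refine tsum_of_norm_bounded hsum fun n => ?_
  rw [norm_smul, norm_inv, Real.norm_natCast, smul_eq_mul]
  gcongr
  rcases n with _ | m
  · simpa using h1
  · exact norm_pow_le' x m.succ_pos

lemma NormedSpace.norm_exp_smul_le (h1 : ‖(1 : 𝔸)‖ ≤ 1) (X : 𝔸) {r m : ℝ} (hr : |r| ≤ m) :
    ‖exp (r • X)‖ ≤ Real.exp (m * ‖X‖) := by
  refine (norm_exp_le_exp_norm h1 _).trans (Real.exp_le_exp.2 ?_)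
  rw [norm_smul, Real.norm_eq_abs]
  gcongr

variable [CompleteSpace 𝔸]

lemma NormedSpace.exp_neg_mul_exp (x : 𝔸) : exp (-x) * exp x = 1 := by
  have hball (y : 𝔸) : y ∈ Metric.eball (0 : 𝔸) (expSeries ℝ 𝔸).radius :=
    (expSeries_radius_eq_top ℝ 𝔸).symm ▸ edist_lt_top _ _
  rw [← exp_add_of_commute_of_mem_ball (Commute.refl x).neg_left (hball _) (hball _),
    neg_add_cancel, exp_zero]

lemma HasDerivWithinAt.mul_exp_neg_smul {F : ℝ → 𝔸} {u : ℝ → ℝ} {X B : 𝔸} {σ : ℝ}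
    {S : Set ℝ} {x : ℝ} (hF : HasDerivWithinAt F (F x * (σ • X + B)) S x)
    (hu : HasDerivWithinAt u σ S x) :
    HasDerivWithinAt (fun t => F t * NormedSpace.exp (-u t • X))
      (F x * B * NormedSpace.exp (-u x • X)) S x := by
  have hG := (hasDerivAt_exp_smul_const (𝕂 := ℝ) X (-u x)).scomp_hasDerivWithinAt x hu.neg
  have hcomm : NormedSpace.exp (-u x • X) * X = X * NormedSpace.exp (-u x • X) :=
    ((Commute.refl X).smul_right _).exp_right.eq.symm
  refine (hF.mul hG).congr_deriv ?_
  rw [hcomm]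
  simp only [Function.comp_apply, Pi.neg_apply, mul_add, add_mul, neg_smul, mul_neg,
    mul_smul_comm, smul_mul_assoc, mul_assoc]
  abel

theorem norm_sub_exp_smul_le {F B : ℝ → 𝔸} {u s : ℝ → ℝ} {X : 𝔸} {a b m δ : ℝ}
    (h1 : ‖(1 : 𝔸)‖ ≤ 1) (hu : ContinuousOn u (Icc a b))
    (hu' : ∀ x ∈ Ico a b, HasDerivWithinAt u (s x) (Ici x) x) (hua : u a = 0)
    (hum : ∀ t ∈ Icc a b, |u t| ≤ m) (hF : ContinuousOn F (Icc a b))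
    (hF' : ∀ x ∈ Ico a b, HasDerivWithinAt F (F x * (s x • X + B x)) (Ici x) x)
    (hFa : F a = 1) (hB : ∀ x ∈ Ico a b, ‖B x‖ ≤ δ) {t : ℝ} (ht : t ∈ Icc a b) :
    ‖F t - exp (u t • X)‖ ≤
      Real.exp (m * ‖X‖) * (Real.exp (Real.exp (m * ‖X‖) ^ 2 * δ * (t - a)) - 1) := by
  set K := Real.exp (m * ‖X‖)
  have hG (t) (ht : t ∈ Icc a b) : ‖exp (u t • X)‖ ≤ K := norm_exp_smul_le h1 X (hum t ht)
  have hGinv (t) (ht : t ∈ Icc a b) : ‖exp (-u t • X)‖ ≤ K :=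
    norm_exp_smul_le h1 X ((abs_neg _).trans_le (hum t ht))
  set H : ℝ → 𝔸 := fun t => F t * exp (-u t • X) - 1
  have hFH (t) : F t = (H t + 1) * exp (u t • X) := by
    simp only [H, sub_add_cancel, mul_assoc, neg_smul, exp_neg_mul_exp, mul_one]
  have hH : ContinuousOn H (Icc a b) :=
    (hF.mul ((differentiable_exp_smul_const ℝ X).continuous.comp_continuousOn hu.neg)).sub
      continuousOn_const
  have hH' (x) (hx : x ∈ Ico a b) :
      HasDerivWithinAt H (F x * B x * exp (-u x • X)) (Ici x) x :=
    ((hF' x hx).mul_exp_neg_smul (hu' x hx)).sub_const 1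
  have hHa : H a = 0 := by simp [H, hFa, hua]
  have bound (x) (hx : x ∈ Ico a b) :
      ‖F x * B x * exp (-u x • X)‖ ≤ K ^ 2 * δ * (‖H x‖ + 1) := by
    have hx' := Ico_subset_Icc_self hx
    calc ‖F x * B x * exp (-u x • X)‖
        ≤ ‖H x + 1‖ * ‖exp (u x • X)‖ * ‖B x‖ * ‖exp (-u x • X)‖ := by
          rw [hFH x]
          refine (norm_mul_le _ _).trans (mul_le_mul_of_nonneg_right ?_ (norm_nonneg _))
          exact (norm_mul_le _ _).trans
            (mul_le_mul_of_nonneg_right (norm_mul_le _ _) (norm_nonneg _))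
      _ ≤ (‖H x‖ + 1) * K * δ * K := by
          have hGx := hG x hx'
          have hBx := hB x hx
          have hGinvx := hGinv x hx'
          have hδ : 0 ≤ δ := (norm_nonneg _).trans hBx
          gcongr
          exact (norm_add_le (H x) 1).trans (by gcongr)
      _ = K ^ 2 * δ * (‖H x‖ + 1) := by ring
  have hHt := norm_le_exp_sub_one_of_norm_deriv_right_le hH hH' hHa bound t ht
  calc ‖F t - exp (u t • X)‖ = ‖H t * exp (u t • X)‖ := by
        rw [hFH t, add_one_mul, add_sub_cancel_right]
    _ ≤ ‖H t‖ * K := (norm_mul_le _ _).trans (by gcongr; exact hG t ht)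
    _ ≤ K * (Real.exp (K ^ 2 * δ * (t - a)) - 1) := by rw [mul_comm]; gcongr

theorem norm_sub_exp_integral_smul_le {F B : ℝ → 𝔸} {s : ℝ → ℝ} {X : 𝔸} {a b m δ : ℝ}
    (h1 : ‖(1 : 𝔸)‖ ≤ 1) (hs : ContinuousOn s (Icc a b)) (hsm : ∫ τ in a..b, |s τ| ≤ m)
    (hF : ∀ t ∈ Icc a b, HasDerivAt F (F t * (s t • X + B t)) t) (hFa : F a = 1)
    (hB : ∀ t ∈ Icc a b, ‖B t‖ ≤ δ) {t : ℝ} (ht : t ∈ Icc a b) :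
    ‖F t - exp ((∫ τ in a..t, s τ) • X)‖ ≤
      Real.exp (m * ‖X‖) * (Real.exp (Real.exp (m * ‖X‖) ^ 2 * δ * (t - a)) - 1) := by
  have hab : a ≤ b := ht.1.trans ht.2
  have hsi := hs.intervalIntegrable_of_Icc (μ := MeasureTheory.volume) hab
  have hu : ContinuousOn (fun t => ∫ τ in a..t, s τ) (Icc a b) := by
    simpa [uIcc_of_le hab] using
      intervalIntegral.continuousOn_primitive_interval' (μ := MeasureTheory.volume) hsi
        left_mem_uIcc
  exact norm_sub_exp_smul_le h1 hu (fun x hx => hs.hasDerivWithinAt_integral_Ici hx)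
    intervalIntegral.integral_same
    (fun t ht => (intervalIntegral.abs_integral_le_integral_abs_of_mem_Icc hsi ht).trans hsm)
    (fun t ht => (hF t ht).continuousAt.continuousWithinAt)
    (fun x hx => (hF x (Ico_subset_Icc_self hx)).hasDerivWithinAt) hFa
    (fun x hx => hB x (Ico_subset_Icc_self hx)) ht

end BanachAlgebra

theorem ode_nearly_abelian_general (n : ℕ) (X : Matrix (Fin n) (Fin n) ℝ)
    (a b : ℝ) (hab : a ≤ b) (M : ℝ) :
    ∃ C δ₁ : ℝ, 0 < C ∧ 0 < δ₁ ∧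
      ∀ (s : ℝ → ℝ) (B F : ℝ → Matrix (Fin n) (Fin n) ℝ) (δ : ℝ), δ < δ₁ →
        ContinuousOn s (Set.Icc a b) → ContinuousOn B (Set.Icc a b) →
        (∫ t in a..b, |s t|) < M →
        (∀ t ∈ Set.Icc a b, ‖B t‖ < δ) →
        (∀ t ∈ Set.Icc a b, HasDerivAt F (F t * (s t • X + B t)) t) →
        F a = 1 →
        ∀ t ∈ Set.Icc a b,
          ‖F t - NormedSpace.exp ((∫ τ in a..t, s τ) • X)‖ ≤ C * δ := by
  set K := Real.exp (M * ‖X‖)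
  set L := K ^ 2 * (b - a)
  have hL : 0 ≤ L := mul_nonneg (by positivity) (sub_nonneg.2 hab)
  refine ⟨K * L * Real.exp L + 1, 1, by positivity, one_pos, ?_⟩
  intro s B F δ hδ1 hs _ hsM hBδ hF hFa t ht
  have hδ0 : 0 ≤ δ := (norm_nonneg _).trans (hBδ a (left_mem_Icc.2 hab)).le
  have hy : K ^ 2 * δ * (t - a) ≤ L * δ :=
    calc K ^ 2 * δ * (t - a) = K ^ 2 * (t - a) * δ := by ring
      _ ≤ K ^ 2 * (b - a) * δ := by gcongr; exact ht.2
  calc _ ≤ K * (Real.exp (K ^ 2 * δ * (t - a)) - 1) :=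
        norm_sub_exp_integral_smul_le (Matrix.linfty_opNorm_one_le (Fin n)) hs hsM.le hF hFa
          (fun t ht => (hBδ t ht).le) ht
    _ ≤ K * (L * Real.exp L * δ) := by
        gcongr
        exact Real.exp_sub_one_le_of_le_mul hL hδ0 hδ1.le hy
    _ = K * L * Real.exp L * δ := by ring
    _ ≤ (K * L * Real.exp L + 1) * δ := by gcongr; linarith

/-- Nearly-abelian ODE estimate: fix `X ∈ Mₙ(ℝ)`, an interval `[a,b]`, and a mass bound
`M > 0`.  There are constants `C, δ₁ > 0` such that if `A(t) = s(t)·X + B(t)` with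
`∫ₐᵇ |s| < M` and `‖B(t)‖ < δ < δ₁`, then the solution of `F' = F·A` with `F(a) = I`
satisfies `‖F(t) − exp((∫ₐᵗ s)·X)‖ ≤ Cδ` on `[a,b]`. -/
theorem ode_nearly_abelian (n : ℕ) (X : Matrix (Fin n) (Fin n) ℝ)
    (a b : ℝ) (hab : a ≤ b) (M : ℝ) (hM : 0 < M) :
    ∃ C δ₁ : ℝ, 0 < C ∧ 0 < δ₁ ∧
      ∀ (s : ℝ → ℝ) (B F : ℝ → Matrix (Fin n) (Fin n) ℝ) (δ : ℝ), δ < δ₁ →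
        ContinuousOn s (Set.Icc a b) → ContinuousOn B (Set.Icc a b) →
        (∫ t in a..b, |s t|) < M →
        (∀ t ∈ Set.Icc a b, ‖B t‖ < δ) →
        (∀ t ∈ Set.Icc a b, HasDerivAt F (F t * (s t • X + B t)) t) →
        F a = 1 →
        ∀ t ∈ Set.Icc a b,
          ‖F t - NormedSpace.exp ((∫ τ in a..t, s τ) • X)‖ ≤ C * δ :=
  ode_nearly_abelian_general n X a b hab M
end
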